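/- arXiv:0704.3456 — 3 statements merged into one kernel-verified Lean document; each statement's English description precedes it below -/
import Mathlib

section
/- Let 𝔍 be a hermitian ideal of the bounded operators on ℓ²(ℕ₀), let α = (α_n)_{n≥1} and β = (β_n)_{n≥1} be sequences compactly included in the open unit disk 𝔻 such that 𝒜(α) − 𝒜(β) ∈ 𝔍, and let a = (a_n)_{n≥1} and b = (b_n)_{n≥1} be sequences in the closed unit disk. Then 𝒞(a) − 𝒞(b) ∈ 𝔍 if and only if 𝒰(a,α) − 𝒰(b,β) ∈ 𝔍. -/
/-!
Common setup: ℓ²(ℕ), CMV operators, diagonal operators and the operator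
Möbius transformation ζ̃_A(T) = η_A⁻¹ (T + A)(1 + A†T)⁻¹ η_{A†},
where η_A = (1 − AA†)^{1/2}.
-/

set_option synthInstance.maxHeartbeats 1000000
set_option maxHeartbeats 1000000

noncomputable section
open Filter

/-- The Hilbert space ℓ²(ℕ₀, ℂ). -/
abbrev H2 : Type := lp (fun _ : ℕ => ℂ) 2

/-- Bounded linear operators on ℓ². -/
abbrev B2 : Type := H2 →L[ℂ] H2

/-- Instance no longer found automatically by type class search on ℓ² operators (port fix). -/
instance instCFCRealB2 : ContinuousFunctionalCalculus ℝ B2 IsSelfAdjoint :=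
  IsSelfAdjoint.instContinuousFunctionalCalculus

/-- `η_A = (1 − A A†)^{1/2}` (the adjoint of `A` is `star A`). -/
def eta (A : B2) : B2 := CFC.sqrt (1 - A * star A)

/-- The operator Möbius transformation `ζ̃_A(T) = η_A⁻¹ (T + A)(1 + A†T)⁻¹ η_{A†}`. -/
def zetaTilde (A T : B2) : B2 :=
  Ring.inverse (eta A) * (T + A) * Ring.inverse (1 + star A * T) * eta (star A)

/-- `ρ_n = (1 − |a_n|²)^{1/2}`. -/
def rho (a : ℕ → ℂ) (n : ℕ) : ℝ := Real.sqrt (1 - ‖a n‖ ^ 2)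

/-- `U` is the block-diagonal operator `Θ₁ ⊕ Θ₃ ⊕ Θ₅ ⊕ ⋯` with
`Θ_n = [[−a_n, ρ_n], [ρ_n, conj a_n]]`. -/
def IsCMVodd (a : ℕ → ℂ) (U : B2) : Prop :=
  ∀ (x : H2) (k : ℕ),
    U x (2 * k) = -(a (2 * k + 1)) * x (2 * k) + (rho a (2 * k + 1) : ℂ) * x (2 * k + 1) ∧
    U x (2 * k + 1) =
      (rho a (2 * k + 1) : ℂ) * x (2 * k) + (starRingEnd ℂ) (a (2 * k + 1)) * x (2 * k + 1)

/-- `U` is the block-diagonal operator `(1) ⊕ Θ₂ ⊕ Θ₄ ⊕ ⋯`. -/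
def IsCMVeven (a : ℕ → ℂ) (U : B2) : Prop :=
  (∀ x : H2, U x 0 = x 0) ∧
  ∀ (x : H2) (k : ℕ),
    U x (2 * k + 1) = -(a (2 * k + 2)) * x (2 * k + 1) + (rho a (2 * k + 2) : ℂ) * x (2 * k + 2) ∧
    U x (2 * k + 2) =
      (rho a (2 * k + 2) : ℂ) * x (2 * k + 1) + (starRingEnd ℂ) (a (2 * k + 2)) * x (2 * k + 2)

/-- `A` is the diagonal operator with diagonal sequence `α` (indices from 0). -/
def IsDiagonal (α : ℕ → ℂ) (A : B2) : Prop := ∀ (x : H2) (n : ℕ), A x n = α n * x n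

/-- A sequence is compactly included in the open unit disk. -/
def CompactlyIncluded (α : ℕ → ℂ) : Prop := ∃ r : ℝ, r < 1 ∧ ∀ n, ‖α n‖ ≤ r

/-- A hermitian ideal of the bounded operators: a linear subspace closed under left and
right multiplication by arbitrary bounded operators and under the adjoint operation. -/
def IsHermitianIdeal (J : Set B2) : Prop :=
  (0 : B2) ∈ J ∧ (∀ S T : B2, S ∈ J → T ∈ J → S + T ∈ J) ∧
    (∀ (c : ℂ) (S : B2), S ∈ J → c • S ∈ J) ∧
    (∀ S T : B2, S ∈ J → T * S ∈ J) ∧ (∀ S T : B2, S ∈ J → S * T ∈ J) ∧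
    (∀ S : B2, S ∈ J → star S ∈ J)

/-!
For a diagonal `A = 𝒜(α)` both defect operators `η_A` and `η_{A†}` equal the diagonal operator
`S` with entries `ρ_n(α)`; it commutes with `A` and `A†` and is invertible when `α` is compactly
included in `𝔻`. Hence `𝒰(a,α) = S⁻¹ (C + A)(1 + A†C)⁻¹ S` with `C = 𝒞(a)`, where
`1 + A†C` is invertible because `‖A†C‖ < 1`, and `C` is recovered from `𝒰(a,α)` by the same
formula with `A` replaced by `-A`. Membership of a difference in `𝔍` is equality in the quotient
ring `B(ℓ²)/𝔍`, and ring homomorphisms preserve inverses of units; so it suffices that the images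
of `A`, `A†` and `S` in the quotient only depend on the class of `A`. For `S` this follows from
`(S_α - S_β)(S_α + S_β) = 𝒜(β)𝒜(β)† - 𝒜(α)𝒜(α)†` with `S_α + S_β` invertible.
-/

open scoped Ring

section Moebius

variable {R Q : Type*} [Ring R] [Ring Q]

lemma map_ringInverse_of_isUnit (f : R →+* Q) {x : R} (hx : IsUnit x) :
    f x⁻¹ʳ = (f x)⁻¹ʳ := by
  obtain ⟨u, rfl⟩ := hx
  rw [Ring.inverse_unit]
  exact (Ring.inverse_unit (Units.map (f : R →* Q) u)).symm

lemma eq_of_mul_self_eq_of_isUnit_add {x y : R} (hxy : Commute x y) (hu : IsUnit (x + y))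
    (h : x * x = y * y) : x = y := by
  have : (x - y) * (x + y) = 0 := by
    rw [sub_mul, mul_add, mul_add, hxy.eq, h]; abel
  exact sub_eq_zero.mp (hu.mul_left_eq_zero.mp this)

/-- `ζ̃_A(C)` in the case `η_A = η_{A†} = S`, with `A'` in the role of `A†`. -/
def moebius (A A' S C : R) : R := S⁻¹ʳ * (C + A) * (1 + A' * C)⁻¹ʳ * S

structure IsDefect (A A' S : R) : Prop where
  isUnit : IsUnit S
  mul_self_eq : S * S = 1 - A * A'
  mul_self_eq' : S * S = 1 - A' * A
  commute : Commute A S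
  commute' : Commute A' S

namespace IsDefect

variable {A A' S C : R}

lemma moebius_add_neg (h : IsDefect A A' S) (hC : IsUnit (1 + A' * C)) :
    moebius A A' S C + -A = S * C * (1 + A' * C)⁻¹ʳ * S := by
  obtain ⟨s, rfl⟩ := h.isUnit
  obtain ⟨k, hk⟩ := hC
  have hA : (↑s⁻¹ * (A * ↑k) * ↑k⁻¹ * ↑s : R) = A := by
    simp only [mul_assoc, Units.mul_inv_cancel_left]
    rw [h.commute.eq, Units.inv_mul_cancel_left]
  rw [moebius, ← hk, Ring.inverse_unit, Ring.inverse_unit]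
  calc ↑s⁻¹ * (C + A) * ↑k⁻¹ * ↑s + -A
      = ↑s⁻¹ * (C + A) * ↑k⁻¹ * ↑s - ↑s⁻¹ * (A * ↑k) * ↑k⁻¹ * ↑s := by rw [hA]; abel
    _ = ↑s⁻¹ * (C + A - A * ↑k) * ↑k⁻¹ * ↑s := by noncomm_ring
    _ = ↑s⁻¹ * (↑s * ↑s * C) * ↑k⁻¹ * ↑s := by rw [hk, h.mul_self_eq]; noncomm_ring
    _ = ↑s * C * ↑k⁻¹ * ↑s := by simp only [mul_assoc, Units.inv_mul_cancel_left]

lemma one_add_neg_mul_moebius (h : IsDefect A A' S) (hC : IsUnit (1 + A' * C)) :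
    1 + -A' * moebius A A' S C = S * (1 + A' * C)⁻¹ʳ * S := by
  obtain ⟨s, rfl⟩ := h.isUnit
  obtain ⟨k, hk⟩ := hC
  have hA' : (A' * ↑s⁻¹ : R) = ↑s⁻¹ * A' := (h.commute'.units_inv_right).eq
  have h1 : (↑s⁻¹ * ↑k * ↑k⁻¹ * ↑s : R) = 1 := by
    simp only [mul_assoc, Units.mul_inv_cancel_left, Units.inv_mul]
  rw [moebius, ← hk, Ring.inverse_unit, Ring.inverse_unit]
  calc 1 + -A' * (↑s⁻¹ * (C + A) * ↑k⁻¹ * ↑s)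
      = ↑s⁻¹ * ↑k * ↑k⁻¹ * ↑s - (A' * ↑s⁻¹) * (C + A) * ↑k⁻¹ * ↑s := by rw [h1]; noncomm_ring
    _ = ↑s⁻¹ * (↑k - A' * (C + A)) * ↑k⁻¹ * ↑s := by rw [hA']; noncomm_ring
    _ = ↑s⁻¹ * (↑s * ↑s) * ↑k⁻¹ * ↑s := by rw [hk, h.mul_self_eq']; noncomm_ring
    _ = ↑s * ↑k⁻¹ * ↑s := by simp only [mul_assoc, Units.inv_mul_cancel_left]

lemma isUnit_one_add_neg_mul_moebius (h : IsDefect A A' S) (hC : IsUnit (1 + A' * C)) :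
    IsUnit (1 + -A' * moebius A A' S C) := by
  rw [h.one_add_neg_mul_moebius hC]
  exact (h.isUnit.mul hC.ringInverse).mul h.isUnit

lemma moebius_neg_moebius (h : IsDefect A A' S) (hC : IsUnit (1 + A' * C)) :
    moebius (-A) (-A') S (moebius A A' S C) = C := by
  rw [moebius, h.moebius_add_neg hC, h.one_add_neg_mul_moebius hC]
  obtain ⟨s, rfl⟩ := h.isUnit
  obtain ⟨k, hk⟩ := hC
  rw [← hk, Ring.inverse_unit, Ring.inverse_unit, ← Units.val_mul, ← Units.val_mul,
    Ring.inverse_unit]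
  simp only [mul_inv_rev, inv_inv, Units.val_mul, mul_assoc, Units.inv_mul_cancel_left,
    Units.mul_inv_cancel_left, Units.inv_mul, mul_one]

lemma map_eq_of_map_eq {B B' T : R} (f : R →+* Q) (hA : IsDefect A A' S) (hB : IsDefect B B' T)
    (hST : Commute S T) (hu : IsUnit (S + T)) (hAB : f A = f B) (hA'B' : f A' = f B') :
    f S = f T := by
  refine eq_of_mul_self_eq_of_isUnit_add (hST.map f) (by simpa using hu.map f) ?_
  rw [← map_mul, ← map_mul, hA.mul_self_eq, hB.mul_self_eq]
  simp only [map_sub, map_one, map_mul, hAB, hA'B']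

end IsDefect

lemma map_moebius_eq_map_moebius (f : R →+* Q) {A A' S C B B' T D : R} (hS : IsUnit S)
    (hT : IsUnit T) (hC : IsUnit (1 + A' * C)) (hD : IsUnit (1 + B' * D)) (hAB : f A = f B)
    (hA'B' : f A' = f B') (hST : f S = f T) (hCD : f C = f D) :
    f (moebius A A' S C) = f (moebius B B' T D) := by
  simp only [moebius, map_mul, map_add, map_ringInverse_of_isUnit f hS,
    map_ringInverse_of_isUnit f hT, map_ringInverse_of_isUnit f hC,
    map_ringInverse_of_isUnit f hD, map_one, hAB, hA'B', hST, hCD]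

theorem IsDefect.map_moebius_eq_iff (f : R →+* Q) {A A' S C B B' T D : R}
    (hA : IsDefect A A' S) (hB : IsDefect B B' T) (hC : IsUnit (1 + A' * C))
    (hD : IsUnit (1 + B' * D)) (hAB : f A = f B) (hA'B' : f A' = f B') (hST : f S = f T) :
    f (moebius A A' S C) = f (moebius B B' T D) ↔ f C = f D := by
  refine ⟨fun h => ?_, map_moebius_eq_map_moebius f hA.isUnit hB.isUnit hC hD hAB hA'B' hST⟩
  rw [← hA.moebius_neg_moebius hC, ← hB.moebius_neg_moebius hD]
  exact map_moebius_eq_map_moebius f hA.isUnit hB.isUnit (hA.isUnit_one_add_neg_mul_moebius hC)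
    (hB.isUnit_one_add_neg_mul_moebius hD) (by rw [map_neg, map_neg, hAB])
    (by rw [map_neg, map_neg, hA'B']) hST h

end Moebius

lemma lp_norm_le_of_forall_le {M : ℝ} (hM : 0 ≤ M) {x y : H2} (h : ∀ n, ‖y n‖ ≤ M * ‖x n‖) :
    ‖y‖ ≤ M * ‖x‖ := by
  have hMx : ‖(M : ℂ) • x‖ = M * ‖x‖ := by
    rw [lp.norm_const_smul (by norm_num), Complex.norm_real, Real.norm_of_nonneg hM]
  refine hMx ▸ lp.norm_mono (by norm_num) fun n => ?_
  rw [lp.coeFn_smul, Pi.smul_apply, norm_smul, Complex.norm_real, Real.norm_of_nonneg hM]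
  exact h n

lemma exists_isDiagonal {γ : ℕ → ℂ} {M : ℝ} (hγ : ∀ n, ‖γ n‖ ≤ M) :
    ∃ T : B2, IsDiagonal γ T := by
  have hM : 0 ≤ M := (norm_nonneg _).trans (hγ 0)
  have hle : ∀ (x : H2) n, ‖γ n * x n‖ ≤ M * ‖x n‖ := fun x n => by
    rw [norm_mul]; exact mul_le_mul_of_nonneg_right (hγ n) (norm_nonneg _)
  have hmem : ∀ x : H2, Memℓp (fun n => γ n * x n) 2 := fun x =>
    (x.2.const_smul (M : ℂ)).mono' fun n => by
      change ‖γ n * x n‖ ≤ ‖(M : ℂ) • x n‖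
      rw [norm_smul, Complex.norm_real, Real.norm_of_nonneg hM]; exact hle x n
  let L : H2 →ₗ[ℂ] H2 :=
    { toFun := fun x => ⟨fun n => γ n * x n, hmem x⟩
      map_add' := fun x y => lp.ext <| funext fun n => mul_add (γ n) (x n) (y n)
      map_smul' := fun c x => lp.ext <| funext fun n => mul_left_comm (γ n) c (x n) }
  exact ⟨L.mkContinuous M fun x => lp_norm_le_of_forall_le hM (hle x), fun x n => rfl⟩

namespace IsDiagonal

variable {γ δ : ℕ → ℂ} {S T : B2}

lemma eq (hS : IsDiagonal γ S) (hT : IsDiagonal γ T) : S = T := by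
  ext x : 1
  exact lp.ext <| funext fun n => by rw [hS, hT]

lemma one : IsDiagonal (fun _ => 1) (1 : B2) := fun x n => by simp

lemma mul (hS : IsDiagonal γ S) (hT : IsDiagonal δ T) :
    IsDiagonal (fun n => γ n * δ n) (S * T) := fun x n => by
  rw [mul_apply_eq_comp, hS, hT, mul_assoc]

lemma add (hS : IsDiagonal γ S) (hT : IsDiagonal δ T) :
    IsDiagonal (fun n => γ n + δ n) (S + T) := fun x n => by
  rw [add_apply, lp.coeFn_add, Pi.add_apply, hS, hT, add_mul]

lemma sub (hS : IsDiagonal γ S) (hT : IsDiagonal δ T) :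
    IsDiagonal (fun n => γ n - δ n) (S - T) := fun x n => by
  rw [sub_apply, lp.coeFn_sub, Pi.sub_apply, hS, hT, sub_mul]

lemma commute (hS : IsDiagonal γ S) (hT : IsDiagonal δ T) : Commute S T :=
  (hS.mul hT).eq fun x n => by rw [hT.mul hS]; exact congrArg (· * x n) (mul_comm _ _)

lemma norm_le {M : ℝ} (hT : IsDiagonal γ T) (hγ : ∀ n, ‖γ n‖ ≤ M) : ‖T‖ ≤ M := by
  have hM : 0 ≤ M := (norm_nonneg _).trans (hγ 0)
  refine T.opNorm_le_bound hM fun x => lp_norm_le_of_forall_le hM fun n => ?_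
  rw [hT, norm_mul]; exact mul_le_mul_of_nonneg_right (hγ n) (norm_nonneg _)

lemma norm_apply_le (hT : IsDiagonal γ T) (n : ℕ) : ‖γ n‖ ≤ ‖T‖ := by
  let e : H2 := lp.single 2 n 1
  have hn : T e n = γ n := by rw [hT, lp.single_apply_self, mul_one]
  have he : ‖e‖ = 1 := by rw [lp.norm_single (by norm_num), norm_one]
  calc ‖γ n‖ = ‖T e n‖ := by rw [hn]
    _ ≤ ‖T e‖ := lp.norm_apply_le_norm two_ne_zero _ n
    _ ≤ ‖T‖ * ‖e‖ := T.le_opNorm e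
    _ = ‖T‖ := by rw [he, mul_one]

lemma star (hT : IsDiagonal γ T) : IsDiagonal (fun n => starRingEnd ℂ (γ n)) (Star.star T) := by
  obtain ⟨T', hT'⟩ := exists_isDiagonal fun n =>
    (RCLike.norm_conj (γ n)).trans_le (hT.norm_apply_le n)
  suffices Star.star T = T' from this ▸ hT'
  rw [ContinuousLinearMap.star_eq_adjoint, eq_comm, ContinuousLinearMap.eq_adjoint_iff]
  intro x y
  rw [lp.inner_eq_tsum, lp.inner_eq_tsum]
  refine tsum_congr fun n => ?_
  rw [RCLike.inner_apply, RCLike.inner_apply, hT, hT', map_mul, Complex.conj_conj]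
  ring

lemma nonneg {γ : ℕ → ℝ} (hT : IsDiagonal (fun n => (γ n : ℂ)) T) (hγ : ∀ n, 0 ≤ γ n) :
    0 ≤ T := by
  have hbound : ∀ n, ‖((Real.sqrt (γ n) : ℝ) : ℂ)‖ ≤ Real.sqrt ‖T‖ := fun n => by
    rw [Complex.norm_real, Real.norm_of_nonneg (Real.sqrt_nonneg _)]
    refine Real.sqrt_le_sqrt ?_
    simpa [Complex.norm_real, Real.norm_of_nonneg (hγ n)] using hT.norm_apply_le n
  obtain ⟨S, hS⟩ := exists_isDiagonal hbound
  have hSS : Star.star S * S = T := (hS.star.mul hS).eq (by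
    simpa only [Complex.conj_ofReal, ← Complex.ofReal_mul, Real.mul_self_sqrt (hγ _)] using hT)
  exact hSS ▸ star_mul_self_nonneg S

lemma isUnit {c : ℝ} (hT : IsDiagonal γ T) (hc : 0 < c) (hγ : ∀ n, c ≤ ‖γ n‖) : IsUnit T := by
  have hγ0 : ∀ n, γ n ≠ 0 := fun n => norm_pos_iff.mp (hc.trans_le (hγ n))
  obtain ⟨T', hT'⟩ := exists_isDiagonal (M := c⁻¹) fun n => by
    rw [norm_inv]; exact inv_anti₀ hc (hγ n)
  refine ⟨⟨T, T', (hT.mul hT').eq ?_, (hT'.mul hT).eq ?_⟩, rfl⟩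
  · simpa only [mul_inv_cancel₀ (hγ0 _)] using one
  · simpa only [inv_mul_cancel₀ (hγ0 _)] using one

end IsDiagonal

lemma mul_self_rho {a : ℕ → ℂ} {n : ℕ} (h : ‖a n‖ ≤ 1) :
    (rho a n : ℂ) * rho a n = 1 - a n * starRingEnd ℂ (a n) := by
  rw [← Complex.ofReal_mul, rho, Real.mul_self_sqrt (by nlinarith [norm_nonneg (a n)]),
    Complex.mul_conj, Complex.normSq_eq_norm_sq]
  push_cast
  ring

lemma rho_conj (a : ℕ → ℂ) : rho (fun n => starRingEnd ℂ (a n)) = rho a := by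
  funext n
  simp only [rho, RCLike.norm_conj]

lemma rho_nonneg (a : ℕ → ℂ) (n : ℕ) : 0 ≤ rho a n := Real.sqrt_nonneg _

lemma norm_rho (a : ℕ → ℂ) (n : ℕ) : ‖(rho a n : ℂ)‖ = rho a n := by
  rw [Complex.norm_real, Real.norm_of_nonneg (rho_nonneg a n)]

lemma exists_isDiagonal_rho (a : ℕ → ℂ) : ∃ S : B2, IsDiagonal (fun n => (rho a n : ℂ)) S :=
  exists_isDiagonal fun n => (norm_rho a n).trans_le <|
    Real.sqrt_le_one.mpr (by nlinarith [norm_nonneg (a n)])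

namespace CompactlyIncluded

variable {α : ℕ → ℂ}

lemma norm_le_one (hα : CompactlyIncluded α) (n : ℕ) : ‖α n‖ ≤ 1 :=
  let ⟨_, hr, hαr⟩ := hα
  (hαr n).trans hr.le

lemma exists_pos_le_rho (hα : CompactlyIncluded α) : ∃ c > 0, ∀ n, c ≤ rho α n := by
  obtain ⟨r, hr, hαr⟩ := hα
  have hr0 : 0 ≤ r := (norm_nonneg _).trans (hαr 0)
  refine ⟨Real.sqrt (1 - r ^ 2), Real.sqrt_pos.mpr (by nlinarith), fun n => ?_⟩
  exact Real.sqrt_le_sqrt (by nlinarith [hαr n, norm_nonneg (α n)])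

end CompactlyIncluded

namespace IsDiagonal

variable {α β : ℕ → ℂ} {A S T : B2}

lemma one_sub_mul_star (hA : IsDiagonal α A) (hα : ∀ n, ‖α n‖ ≤ 1)
    (hS : IsDiagonal (fun n => (rho α n : ℂ)) S) : 1 - A * Star.star A = S * S :=
  (one.sub (hA.mul hA.star)).eq (by simpa only [mul_self_rho (hα _)] using hS.mul hS)

lemma one_sub_star_mul (hA : IsDiagonal α A) (hα : ∀ n, ‖α n‖ ≤ 1)
    (hS : IsDiagonal (fun n => (rho α n : ℂ)) S) : 1 - Star.star A * A = S * S :=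
  (one.sub (hA.star.mul hA)).eq (by simpa only [mul_self_rho (hα _), mul_comm] using hS.mul hS)

lemma eta_eq (hA : IsDiagonal α A) (hα : ∀ n, ‖α n‖ ≤ 1)
    (hS : IsDiagonal (fun n => (rho α n : ℂ)) S) : eta A = S :=
  CFC.sqrt_unique (hA.one_sub_mul_star hα hS).symm (hS.nonneg (rho_nonneg α))

lemma eta_star_eq (hA : IsDiagonal α A) (hα : ∀ n, ‖α n‖ ≤ 1)
    (hS : IsDiagonal (fun n => (rho α n : ℂ)) S) : eta (Star.star A) = S :=
  hA.star.eta_eq (fun n => (RCLike.norm_conj _).trans_le (hα n)) (by rwa [rho_conj])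

lemma zetaTilde_eq_moebius (hA : IsDiagonal α A) (hα : ∀ n, ‖α n‖ ≤ 1)
    (hS : IsDiagonal (fun n => (rho α n : ℂ)) S) (C : B2) :
    zetaTilde A C = moebius A (Star.star A) S C := by
  rw [zetaTilde, moebius, hA.eta_eq hα hS, hA.eta_star_eq hα hS]

lemma isDefect (hA : IsDiagonal α A) (hα : CompactlyIncluded α)
    (hS : IsDiagonal (fun n => (rho α n : ℂ)) S) : IsDefect A (Star.star A) S := by
  obtain ⟨c, hc, hcρ⟩ := hα.exists_pos_le_rho
  exact ⟨hS.isUnit hc fun n => (norm_rho α n).symm ▸ hcρ n,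
    (hA.one_sub_mul_star hα.norm_le_one hS).symm, (hA.one_sub_star_mul hα.norm_le_one hS).symm,
    hA.commute hS, hA.star.commute hS⟩

lemma isUnit_add_of_rho (hα : CompactlyIncluded α) (hS : IsDiagonal (fun n => (rho α n : ℂ)) S)
    (hT : IsDiagonal (fun n => (rho β n : ℂ)) T) : IsUnit (S + T) := by
  obtain ⟨c, hc, hcρ⟩ := hα.exists_pos_le_rho
  refine (hS.add hT).isUnit hc fun n => ?_
  rw [← Complex.ofReal_add, Complex.norm_real]
  exact (hcρ n).trans ((le_add_of_nonneg_right (rho_nonneg β n)).trans (Real.le_norm_self _))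

lemma isUnit_one_add_star_mul (hA : IsDiagonal α A) (hα : CompactlyIncluded α) {C : B2}
    (hC : ‖C‖ ≤ 1) : IsUnit (1 + Star.star A * C) := by
  obtain ⟨r, hr, hαr⟩ := hα
  have hAC : ‖Star.star A * C‖ < 1 :=
    calc ‖Star.star A * C‖ ≤ ‖Star.star A‖ * ‖C‖ := norm_mul_le _ _
      _ ≤ r * 1 := mul_le_mul ((norm_star A).trans_le (hA.norm_le hαr)) hC (norm_nonneg _)
          ((norm_nonneg _).trans (hαr 0))
      _ < 1 := by linarith
  simpa using isUnit_one_sub_of_norm_lt_one (x := -(Star.star A * C)) (by rwa [norm_neg])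

end IsDiagonal

lemma lp_norm_sq_eq_tsum (f : H2) : ‖f‖ ^ 2 = ∑' n, ‖f n‖ ^ 2 := by
  simpa using lp.norm_rpow_eq_tsum (p := 2) (by norm_num) f

lemma lp_summable_norm_sq (f : H2) : Summable fun n => ‖f n‖ ^ 2 := by
  simpa using (lp.memℓp f).summable (p := 2) (by norm_num)

lemma tsum_eq_tsum_of_pairs {f g : ℕ → ℝ} (hf : Summable f) (hg : Summable g)
    (h : ∀ k, f (2 * k) + f (2 * k + 1) = g (2 * k) + g (2 * k + 1)) : ∑' n, f n = ∑' n, g n := by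
  have hev : Function.Injective fun k : ℕ => 2 * k := mul_right_injective₀ two_ne_zero
  have hodd : Function.Injective fun k : ℕ => 2 * k + 1 := (add_left_injective 1).comp hev
  have hfe : Summable fun k => f (2 * k) := hf.comp_injective hev
  have hfo : Summable fun k => f (2 * k + 1) := hf.comp_injective hodd
  have hge : Summable fun k => g (2 * k) := hg.comp_injective hev
  have hgo : Summable fun k => g (2 * k + 1) := hg.comp_injective hodd
  rw [← tsum_even_add_odd hfe hfo, ← tsum_even_add_odd hge hgo, ← hfe.tsum_add hfo,
    ← hge.tsum_add hgo]
  exact tsum_congr h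

lemma tsum_eq_tsum_of_shifted_pairs {f g : ℕ → ℝ} (hf : Summable f) (hg : Summable g)
    (h0 : f 0 = g 0) (h : ∀ k, f (2 * k + 1) + f (2 * k + 2) = g (2 * k + 1) + g (2 * k + 2)) :
    ∑' n, f n = ∑' n, g n := by
  rw [hf.tsum_eq_zero_add, hg.tsum_eq_zero_add, h0,
    tsum_eq_tsum_of_pairs ((summable_nat_add_iff 1).mpr hf) ((summable_nat_add_iff 1).mpr hg) h]

lemma norm_le_one_of_tsum_norm_sq_eq {U : B2}
    (h : ∀ x : H2, ∑' n, ‖U x n‖ ^ 2 = ∑' n, ‖x n‖ ^ 2) : ‖U‖ ≤ 1 := by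
  refine U.opNorm_le_bound zero_le_one fun x => le_of_eq ?_
  rw [one_mul, ← sq_eq_sq₀ (norm_nonneg _) (norm_nonneg _), lp_norm_sq_eq_tsum,
    lp_norm_sq_eq_tsum, h]

lemma norm_sq_add_norm_sq_theta {a : ℕ → ℂ} {m : ℕ} (ha : ‖a m‖ ≤ 1) (u v : ℂ) :
    ‖-a m * u + rho a m * v‖ ^ 2 + ‖rho a m * u + starRingEnd ℂ (a m) * v‖ ^ 2 =
      ‖u‖ ^ 2 + ‖v‖ ^ 2 := by
  have hρ : rho a m ^ 2 = 1 - ((a m).re ^ 2 + (a m).im ^ 2) := by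
    rw [rho, Real.sq_sqrt (by nlinarith [norm_nonneg (a m)]), Complex.sq_norm,
      Complex.normSq_apply]
    ring
  simp only [← Complex.normSq_eq_norm_sq, Complex.normSq_apply, Complex.add_re, Complex.add_im,
    Complex.mul_re, Complex.mul_im, Complex.neg_re, Complex.neg_im, Complex.conj_re,
    Complex.conj_im, Complex.ofReal_re, Complex.ofReal_im]
  linear_combination (u.re ^ 2 + u.im ^ 2 + v.re ^ 2 + v.im ^ 2) * hρ

section CMV

variable {a : ℕ → ℂ} {U : B2}

lemma IsCMVodd.norm_le_one (ha : ∀ n, 1 ≤ n → ‖a n‖ ≤ 1) (hU : IsCMVodd a U) : ‖U‖ ≤ 1 :=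
  norm_le_one_of_tsum_norm_sq_eq fun x =>
    tsum_eq_tsum_of_pairs (lp_summable_norm_sq _) (lp_summable_norm_sq x) fun k => by
      rw [(hU x k).1, (hU x k).2, norm_sq_add_norm_sq_theta (ha _ (by omega))]

lemma IsCMVeven.norm_le_one (ha : ∀ n, 1 ≤ n → ‖a n‖ ≤ 1) (hU : IsCMVeven a U) : ‖U‖ ≤ 1 :=
  norm_le_one_of_tsum_norm_sq_eq fun x =>
    tsum_eq_tsum_of_shifted_pairs (lp_summable_norm_sq _) (lp_summable_norm_sq x)
      (by rw [hU.1 x]) fun k => by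
      rw [(hU.2 x k).1, (hU.2 x k).2, norm_sq_add_norm_sq_theta (ha _ (by omega))]

lemma norm_cmv_le_one {Co Ce : B2} (ha : ∀ n, 1 ≤ n → ‖a n‖ ≤ 1) (hCo : IsCMVodd a Co)
    (hCe : IsCMVeven a Ce) : ‖Co * Ce‖ ≤ 1 :=
  (norm_mul_le _ _).trans <|
    mul_le_one₀ (hCo.norm_le_one ha) (norm_nonneg _) (hCe.norm_le_one ha)

end CMV

namespace IsHermitianIdeal

variable {J : Set B2}

def toTwoSidedIdeal (hJ : IsHermitianIdeal J) : TwoSidedIdeal B2 :=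
  .mk' J hJ.1 (hJ.2.1 _ _) (fun hx => by simpa using hJ.2.2.1 (-1) _ hx) (hJ.2.2.2.1 _ _)
    (hJ.2.2.2.2.1 _ _)

abbrev mkQ (hJ : IsHermitianIdeal J) : B2 →+* hJ.toTwoSidedIdeal.ringCon.Quotient :=
  hJ.toTwoSidedIdeal.ringCon.mk'

lemma mkQ_eq_mkQ_iff (hJ : IsHermitianIdeal J) {S T : B2} : hJ.mkQ S = hJ.mkQ T ↔ S - T ∈ J :=
  (RingCon.eq _).trans <| (TwoSidedIdeal.rel_iff _ _ _).trans (TwoSidedIdeal.mem_mk' ..)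

lemma mkQ_star_eq (hJ : IsHermitianIdeal J) {S T : B2} (h : hJ.mkQ S = hJ.mkQ T) :
    hJ.mkQ (star S) = hJ.mkQ (star T) := by
  rw [mkQ_eq_mkQ_iff] at h ⊢
  exact star_sub S T ▸ hJ.2.2.2.2.2 _ h

end IsHermitianIdeal

theorem cmv_sub_mem_ideal_iff_moebius_sub_mem_ideal_general
    (J : Set B2) (hJ : IsHermitianIdeal J)
    (α β : ℕ → ℂ)
    (hα : CompactlyIncluded α) (hβ : CompactlyIncluded β)
    (a b : ℕ → ℂ) (ha : ∀ n, 1 ≤ n → ‖a n‖ ≤ 1) (hb : ∀ n, 1 ≤ n → ‖b n‖ ≤ 1)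
    (Aop Bop Coa Cea Cob Ceb : B2)
    (hAop : IsDiagonal α Aop) (hBop : IsDiagonal β Bop)
    (hCoa : IsCMVodd a Coa) (hCea : IsCMVeven a Cea)
    (hCob : IsCMVodd b Cob) (hCeb : IsCMVeven b Ceb)
    (hAB : Aop - Bop ∈ J) :
    Coa * Cea - Cob * Ceb ∈ J ↔
      zetaTilde Aop (Coa * Cea) - zetaTilde Bop (Cob * Ceb) ∈ J := by
  obtain ⟨Sa, hSa⟩ := exists_isDiagonal_rho α
  obtain ⟨Sb, hSb⟩ := exists_isDiagonal_rho β
  have hA := hAop.isDefect hα hSa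
  have hB := hBop.isDefect hβ hSb
  rw [← hJ.mkQ_eq_mkQ_iff] at hAB
  have hAB' := hJ.mkQ_star_eq hAB
  have hSab := hA.map_eq_of_map_eq hJ.mkQ hB (hSa.commute hSb) (hSa.isUnit_add_of_rho hα hSb)
    hAB hAB'
  rw [← hJ.mkQ_eq_mkQ_iff, ← hJ.mkQ_eq_mkQ_iff, hAop.zetaTilde_eq_moebius hα.norm_le_one hSa,
    hBop.zetaTilde_eq_moebius hβ.norm_le_one hSb]
  exact (hA.map_moebius_eq_iff hJ.mkQ hB
    (hAop.isUnit_one_add_star_mul hα (norm_cmv_le_one ha hCoa hCea))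
    (hBop.isUnit_one_add_star_mul hβ (norm_cmv_le_one hb hCob hCeb)) hAB hAB' hSab).symm

/-- if `𝒜(α) − 𝒜(β)` belongs to a hermitian ideal `J`, with `α, β` compactly
included in `𝔻`, then for any sequences `a, b` in the closed unit disk,
`𝒞(a) − 𝒞(b) ∈ J ↔ 𝒰(a,α) − 𝒰(b,β) ∈ J`. -/
theorem cmv_sub_mem_ideal_iff_moebius_sub_mem_ideal
    (J : Set B2) (hJ : IsHermitianIdeal J)
    (α β : ℕ → ℂ) (hα0 : α 0 = 0) (hβ0 : β 0 = 0)
    (hα : CompactlyIncluded α) (hβ : CompactlyIncluded β)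
    (a b : ℕ → ℂ) (ha : ∀ n, 1 ≤ n → ‖a n‖ ≤ 1) (hb : ∀ n, 1 ≤ n → ‖b n‖ ≤ 1)
    (Aop Bop Coa Cea Cob Ceb : B2)
    (hAop : IsDiagonal α Aop) (hBop : IsDiagonal β Bop)
    (hCoa : IsCMVodd a Coa) (hCea : IsCMVeven a Cea)
    (hCob : IsCMVodd b Cob) (hCeb : IsCMVeven b Ceb)
    (hAB : Aop - Bop ∈ J) :
    Coa * Cea - Cob * Ceb ∈ J ↔
      zetaTilde Aop (Coa * Cea) - zetaTilde Bop (Cob * Ceb) ∈ J :=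
  cmv_sub_mem_ideal_iff_moebius_sub_mem_ideal_general J hJ α β hα hβ a b ha hb Aop Bop Coa Cea Cob
    Ceb hAop hBop hCoa hCea hCob hCeb hAB
end
end

section
/- Fix n ≥ 1, parameters α_1, …, α_n ∈ 𝔻 (with α_0 = 0) and a_1, …, a_n ∈ 𝔻, and let φ_n and p_n = π_n φ_n be given by the orthogonal rational function recurrence. Let 𝒞_n be the n×n principal submatrix of the CMV matrix 𝒞(a). Then there exists a nonzero constant c ∈ ℂ such that p_n(z) = c · det( D*_n(z) − D_n(z) 𝒞_n ) for all z ∈ ℂ, where D*_n(z) = diag(z − α_0, …, z − α_{n−1}) and D_n(z) = diag(1 − conj(α_0) z, …, 1 − conj(α_{n−1}) z). In particular, the zeros of φ_n are exactly the eigenvalues of the matrix pair (D*-part, D-part), equivalently of ζ̃_{𝒜_n}(𝒞_n) with 𝒜_n = diag(α_0, …, α_{n−1}). -/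
/-!
Setup for orthogonal rational functions on the unit circle: `ϖ_k(z) = 1 − conj(α_k) z`,
`ϖ*_k(z) = z − α_k`, `η_k = (1 − |α_k|²)^{1/2}`, `ρ_k = (1 − |a_k|²)^{1/2}`,
`e_k = η_k/(η_{k−1} ρ_k)` (conventions `α_0 = 0`, `a_0 = 1`).
-/

noncomputable section

/-- `ϖ_k(z) = 1 − conj(α_k) z`. -/
def pw (α : ℕ → ℂ) (k : ℕ) (z : ℂ) : ℂ := 1 - (starRingEnd ℂ) (α k) * z

/-- `ϖ*_k(z) = z − α_k`. -/
def pws (α : ℕ → ℂ) (k : ℕ) (z : ℂ) : ℂ := z - α k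

/-- `η_k = (1 − |α_k|²)^{1/2}`. -/
def etaS (α : ℕ → ℂ) (k : ℕ) : ℝ := Real.sqrt (1 - ‖α k‖ ^ 2)

/-- `ρ_k = (1 − |a_k|²)^{1/2}`. -/
def rhoS (a : ℕ → ℂ) (k : ℕ) : ℝ := Real.sqrt (1 - ‖a k‖ ^ 2)

/-- `e_k = η_k/(η_{k−1} ρ_k)`. -/
def eS (α a : ℕ → ℂ) (k : ℕ) : ℝ := etaS α k / (etaS α (k - 1) * rhoS a k)

/-- The pair of numerator polynomials `(p_k, p*_k)` of the orthogonal rational functions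
`φ_k = p_k/π_k`, `φ*_k = p*_k/π_k`, obtained by clearing denominators in the recurrence:
`p_k = e_k (ϖ*_{k−1} p_{k−1} + a_k ϖ_{k−1} p*_{k−1})`,
`p*_k = e_k (conj(a_k) ϖ*_{k−1} p_{k−1} + ϖ_{k−1} p*_{k−1})`, `p_0 = p*_0 = 1`. -/
def orfNum (α a : ℕ → ℂ) : ℕ → (ℂ → ℂ) × (ℂ → ℂ)
  | 0 => (fun _ => 1, fun _ => 1)
  | k + 1 =>
    (fun z => (eS α a (k + 1) : ℂ) *
        (pws α k z * (orfNum α a k).1 z + a (k + 1) * pw α k z * (orfNum α a k).2 z),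
     fun z => (eS α a (k + 1) : ℂ) *
        ((starRingEnd ℂ) (a (k + 1)) * pws α k z * (orfNum α a k).1 z +
          pw α k z * (orfNum α a k).2 z))

/-- Entries of the infinite matrix `𝒞_o = Θ₁ ⊕ Θ₃ ⊕ ⋯` (rows/columns from 0). -/
def CoEntry (a : ℕ → ℂ) (i j : ℕ) : ℂ :=
  if i = j then (if i % 2 = 0 then -(a (i + 1)) else (starRingEnd ℂ) (a i))
  else if j = i + 1 ∧ i % 2 = 0 then (rhoS a (i + 1) : ℂ)
  else if i = j + 1 ∧ j % 2 = 0 then (rhoS a (j + 1) : ℂ)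
  else 0

/-- Entries of the infinite matrix `𝒞_e = (1) ⊕ Θ₂ ⊕ Θ₄ ⊕ ⋯` (rows/columns from 0). -/
def CeEntry (a : ℕ → ℂ) (i j : ℕ) : ℂ :=
  if i = j then (if i = 0 then 1 else if i % 2 = 1 then -(a (i + 1)) else (starRingEnd ℂ) (a i))
  else if j = i + 1 ∧ i % 2 = 1 then (rhoS a (i + 1) : ℂ)
  else if i = j + 1 ∧ j % 2 = 1 then (rhoS a (j + 1) : ℂ)
  else 0

/-- The `n×n` principal submatrix `𝒞_n = 𝒞_{o,n} 𝒞_{e,n}` of the CMV matrix. -/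
def cmvN (a : ℕ → ℂ) (n : ℕ) : Matrix (Fin n) (Fin n) ℂ :=
  (Matrix.of fun i j : Fin n => CoEntry a i j) * (Matrix.of fun i j : Fin n => CeEntry a i j)

/-- The diagonal matrix `η_{𝒜_n} = diag(η_0, …, η_{n−1})`. -/
def etaMat (α : ℕ → ℂ) (n : ℕ) : Matrix (Fin n) (Fin n) ℂ :=
  Matrix.diagonal fun i : Fin n => (etaS α i : ℂ)

/-- The matrix Möbius transformation
`ζ̃_{𝒜_n}(T) = η_{𝒜_n}⁻¹ (T + 𝒜_n)(1 + 𝒜_n† T)⁻¹ η_{𝒜_n}` for the diagonal matrix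
`𝒜_n = diag(α_0, …, α_{n−1})` (which is normal, so `η_{𝒜_n†} = η_{𝒜_n}`). -/
def zetaTildeMat (α : ℕ → ℂ) {n : ℕ} (T : Matrix (Fin n) (Fin n) ℂ) :
    Matrix (Fin n) (Fin n) ℂ :=
  (etaMat α n)⁻¹ * (T + Matrix.diagonal fun i : Fin n => α i) *
    (1 + (Matrix.diagonal fun i : Fin n => (starRingEnd ℂ) (α i)) * T)⁻¹ * etaMat α n

/-!
Write `𝒞_n = L M` with `L` the truncation of `Θ₁ ⊕ Θ₃ ⊕ ⋯` and `M` that of `(1) ⊕ Θ₂ ⊕ Θ₄ ⊕ ⋯`.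
When the truncated last block of `M` is invertible, `M⁻¹ = N` is again block diagonal, with the
blocks `[[-conj a_k, ρ_k], [ρ_k, a_k]]`, and `D* - D L M = (D* N - D L) M` where `D* N - D L` is
tridiagonal. The three-term recurrence for its leading minors is the recurrence of the `φ_k` with
the factors `e_k` removed, and `det M = ±1` or `±a_n`. If the last block of `M` is the singular
`1 × 1` block `(-a_n) = (0)`, the last column of `𝒞_n` vanishes and one drops to size `n - 1`.

For the spectrum, `ζ̃_{𝒜_n}(𝒞_n)` is conjugate to `K G⁻¹` with `z G - K = D*(z) - D(z) 𝒞_n`.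
The same determinant formula, with the diagonals `ϖ*_k(z)`, `ϖ_k(z)` replaced by `1`, `-conj α_k`,
computes `det G` as the first component `t` of a pair `(t, s)`. Along that recurrence
`|t|² - |s|²` becomes `(1 - |a_k|²) (|t|² - |α_k|² |s|²)`, so `|s| ≤ |t|` and `t ≠ 0` persist,
and `G` is invertible.
-/

namespace CMV

open Matrix

section LinearAlgebra

variable {R : Type*} [CommRing R]

theorem det_succ_of_col_last_eq_zero {n : ℕ} (M : Matrix (Fin (n + 1)) (Fin (n + 1)) R)
    (h : ∀ i : Fin n, M i.castSucc (Fin.last n) = 0) :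
    M.det = M (Fin.last n) (Fin.last n) * (M.submatrix Fin.castSucc Fin.castSucc).det := by
  rw [det_succ_column M (Fin.last n), Fin.sum_univ_castSucc]
  simp [h, Fin.succAbove_last, ← two_mul, pow_mul]

def trunc (f : ℕ → ℕ → R) (n : ℕ) : Matrix (Fin n) (Fin n) R :=
  Matrix.of fun i j => f i j

theorem det_trunc_succ_succ_of_tridiagonal (f : ℕ → ℕ → R)
    (hf : ∀ i j, i + 2 ≤ j ∨ j + 2 ≤ i → f i j = 0) (n : ℕ) :
    (trunc f (n + 2)).det =
      f (n + 1) (n + 1) * (trunc f (n + 1)).det - f (n + 1) n * f n (n + 1) * (trunc f n).det := by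
  have hminor : ((trunc f (n + 2)).submatrix (Fin.last (n + 1)).succAbove
      (Fin.last n).castSucc.succAbove).det = f n (n + 1) * (trunc f n).det := by
    rw [det_succ_of_col_last_eq_zero]
    · congr 2
      · simp [trunc, Fin.succAbove]
      · ext i j
        simp [trunc, Fin.succAbove, Fin.lt_def, j.isLt]
    · intro i
      simpa [trunc, Fin.succAbove] using hf i (n + 1) (by omega)
  have hprincipal : (trunc f (n + 2)).submatrix Fin.castSucc Fin.castSucc = trunc f (n + 1) := rfl
  rw [det_succ_row _ (Fin.last (n + 1)), Fin.sum_univ_castSucc, Fin.sum_univ_castSucc, hminor,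
    Fin.succAbove_last, hprincipal]
  simp [trunc, hf (n + 1), ← two_mul, pow_mul]
  ring

variable (x y : ℕ → R)

theorem det_diagonal_sub_diagonal_mul_of_col_last_eq_zero {m : ℕ}
    (C : Matrix (Fin (m + 1)) (Fin (m + 1)) R) (hC : ∀ i, C i (Fin.last m) = 0) :
    (diagonal (fun i : Fin (m + 1) => x i) - diagonal (fun i : Fin (m + 1) => y i) * C).det =
      x m * (diagonal (fun i : Fin m => x i) -
        diagonal (fun i : Fin m => y i) * C.submatrix Fin.castSucc Fin.castSucc).det := by
  rw [det_succ_of_col_last_eq_zero]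
  · congr 2
    · simp [diagonal_mul, hC]
    · ext i j
      simp [diagonal_mul, diagonal_apply]
  · intro i
    simp [diagonal_mul, hC, (Fin.castSucc_lt_last i).ne]

end LinearAlgebra

theorem sum_range_eq_add_of_support {M : Type*} [AddCommMonoid M] (f : ℕ → M) {n p : ℕ}
    (hp : p < n) (hf : ∀ k, k ≠ p → k ≠ p + 1 → f k = 0) :
    ∑ k ∈ Finset.range n, f k = f p + if p + 1 < n then f (p + 1) else 0 := by
  split_ifs with hp'
  · exact Finset.sum_eq_add_of_mem p (p + 1) (by simpa) (by simpa) (by omega)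
      fun k _ hk => hf k hk.1 hk.2
  · rw [Finset.sum_eq_single_of_mem p (by simpa) fun k hk hkp => hf k hkp (by simp at hk; omega),
      add_zero]

section Spectrum

variable {𝕜 ι : Type*} [Field 𝕜] [Fintype ι] [DecidableEq ι]

theorem spectrum_mul_nonsing_inv (K G : Matrix ι ι 𝕜) (hG : IsUnit G.det) :
    spectrum 𝕜 (K * G⁻¹) = {z | (z • G - K).det = 0} := by
  ext z
  have hfactor : algebraMap 𝕜 (Matrix ι ι 𝕜) z - K * G⁻¹ = (z • G - K) * G⁻¹ := by
    rw [sub_mul, smul_mul_assoc, mul_nonsing_inv G hG, Algebra.algebraMap_eq_smul_one]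
  rw [spectrum.mem_iff, hfactor, isUnit_iff_isUnit_det, det_mul, IsUnit.mul_iff,
    and_iff_left (isUnit_nonsing_inv_det G hG), isUnit_iff_ne_zero, not_not]
  rfl

theorem spectrum_nonsing_inv_mul_mul (T H : Matrix ι ι 𝕜) (hH : IsUnit H.det) :
    spectrum 𝕜 (H⁻¹ * T * H) = spectrum 𝕜 T := by
  have hu : IsUnit H := (isUnit_iff_isUnit_det H).2 hH
  rw [← hu.unit_spec, ← coe_units_inv]
  exact spectrum.units_conjugate'

end Spectrum

section Factors

variable {R : Type*} [CommRing R] (A B r : ℕ → R)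

/-- `Θ₁ ⊕ Θ₃ ⊕ ⋯` with `Θ_k = [[-A k, r k], [r k, B k]]`; `CoEntry a` is the case
`B = conj ∘ a`, `r = ρ`. -/
def oddFactor (i j : ℕ) : R :=
  if i = j then (if i % 2 = 0 then -A (i + 1) else B i)
  else if j = i + 1 ∧ i % 2 = 0 then r (i + 1)
  else if i = j + 1 ∧ j % 2 = 0 then r (j + 1)
  else 0

/-- `(1) ⊕ Θ₂ ⊕ Θ₄ ⊕ ⋯`, generalising `CeEntry` in the same way. -/
def evenFactor (i j : ℕ) : R :=
  if i = j then (if i = 0 then 1 else if i % 2 = 1 then -A (i + 1) else B i)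
  else if j = i + 1 ∧ i % 2 = 1 then r (i + 1)
  else if i = j + 1 ∧ j % 2 = 1 then r (j + 1)
  else 0

theorem oddFactor_eq_zero {i j : ℕ} (h : i / 2 ≠ j / 2) : oddFactor A B r i j = 0 := by
  unfold oddFactor; split_ifs <;> first | rfl | omega

theorem oddFactor_diag_of_even {i : ℕ} (h : i % 2 = 0) : oddFactor A B r i i = -A (i + 1) := by
  unfold oddFactor; split_ifs <;> first | rfl | omega

theorem oddFactor_diag_of_odd {i : ℕ} (h : i % 2 = 1) : oddFactor A B r i i = B i := by
  unfold oddFactor; split_ifs <;> first | rfl | omega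

theorem oddFactor_succ_of_even {i : ℕ} (h : i % 2 = 0) : oddFactor A B r i (i + 1) = r (i + 1) := by
  unfold oddFactor; split_ifs <;> first | rfl | omega

theorem oddFactor_succ_left_of_even {i : ℕ} (h : i % 2 = 0) :
    oddFactor A B r (i + 1) i = r (i + 1) := by
  unfold oddFactor; split_ifs <;> first | rfl | omega

theorem evenFactor_eq_zero {i j : ℕ} (h : (i + 1) / 2 ≠ (j + 1) / 2) :
    evenFactor A B r i j = 0 := by
  unfold evenFactor; split_ifs <;> first | rfl | omega

theorem evenFactor_zero_zero : evenFactor A B r 0 0 = 1 := rfl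

theorem evenFactor_diag_of_odd {i : ℕ} (h : i % 2 = 1) : evenFactor A B r i i = -A (i + 1) := by
  unfold evenFactor; split_ifs <;> first | rfl | omega

theorem evenFactor_diag_of_even {i : ℕ} (h : i % 2 = 0) (h0 : i ≠ 0) :
    evenFactor A B r i i = B i := by
  unfold evenFactor; split_ifs <;> first | rfl | omega

theorem evenFactor_succ_of_odd {i : ℕ} (h : i % 2 = 1) :
    evenFactor A B r i (i + 1) = r (i + 1) := by
  unfold evenFactor; split_ifs <;> first | rfl | omega

theorem evenFactor_succ_left_of_odd {i : ℕ} (h : i % 2 = 1) :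
    evenFactor A B r (i + 1) i = r (i + 1) := by
  unfold evenFactor; split_ifs <;> first | rfl | omega

theorem trunc_oddFactor_congr_right {B' : ℕ → R} {n : ℕ} (h : ∀ k < n, B' k = B k) :
    trunc (oddFactor A B' r) n = trunc (oddFactor A B r) n := by
  ext i j
  simp [trunc, oddFactor, h i i.isLt]

theorem trunc_evenFactor_congr_right {B' : ℕ → R} {n : ℕ} (h : ∀ k < n, B' k = B k) :
    trunc (evenFactor A B' r) n = trunc (evenFactor A B r) n := by
  ext i j
  simp [trunc, evenFactor, h i i.isLt]

theorem trunc_cmv_submatrix_castSucc (m : ℕ) :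
    (trunc (oddFactor A B r) (m + 1) * trunc (evenFactor A B r) (m + 1)).submatrix
        Fin.castSucc Fin.castSucc = trunc (oddFactor A B r) m * trunc (evenFactor A B r) m := by
  ext i j
  simp only [submatrix_apply, mul_apply, Fin.sum_univ_castSucc, trunc, of_apply, Fin.val_castSucc,
    Fin.val_last]
  rcases Nat.mod_two_eq_zero_or_one m with h | h
  · rw [oddFactor_eq_zero A B r (i := i) (j := m) (by omega), zero_mul, add_zero]
  · rw [evenFactor_eq_zero A B r (i := m) (j := j) (by omega), mul_zero, add_zero]

theorem trunc_evenFactor_swap_mul {n : ℕ} (hr : ∀ k, 1 ≤ k → k < n → A k * B k + r k ^ 2 = 1)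
    (hlast : Even n → A n * B n = 1) :
    trunc (evenFactor B A r) n * trunc (evenFactor A B r) n = 1 := by
  ext ⟨i, hi⟩ ⟨j, hj⟩
  simp only [mul_apply, one_apply, Fin.mk.injEq, trunc, of_apply]
  rw [Fin.sum_univ_eq_sum_range (fun k => evenFactor B A r i k * evenFactor A B r k j)]
  rcases Nat.eq_zero_or_pos i with rfl | hi0
  · rw [Finset.sum_eq_single_of_mem 0 (by simpa using hi)
      fun k _ hk => by rw [evenFactor_eq_zero B A r (by omega), zero_mul]]
    rcases Nat.eq_zero_or_pos j with rfl | hj0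
    · simp [evenFactor_zero_zero]
    · simp [evenFactor_zero_zero, evenFactor_eq_zero A B r (i := 0) (j := j) (by omega), hj0.ne]
  obtain ⟨b, hb⟩ : ∃ b, i = 2 * b + 1 ∨ i = 2 * b + 2 := ⟨(i - 1) / 2, by omega⟩
  rw [sum_range_eq_add_of_support _ (p := 2 * b + 1) (by omega)
    fun k h1 h2 => by rw [evenFactor_eq_zero B A r (by omega), zero_mul]]
  have hblock : 2 * b + 2 < n → A (2 * b + 2) * B (2 * b + 2) + r (2 * b + 2) ^ 2 = 1 :=
    hr _ (by omega)
  have hcut : ¬ 2 * b + 2 < n → A (2 * b + 2) * B (2 * b + 2) = 1 := fun h =>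
    (show n = 2 * b + 2 by omega) ▸ hlast ⟨b + 1, by omega⟩
  rcases (show (j + 1) / 2 ≠ b + 1 ∨ j = 2 * b + 1 ∨ j = 2 * b + 2 by omega) with hjb | rfl | rfl
  · rw [evenFactor_eq_zero A B r (i := 2 * b + 1) (by omega),
      evenFactor_eq_zero A B r (i := 2 * b + 2) (by omega), if_neg (show i ≠ j by omega)]
    simp
  -- What remains is `[[-B, r], [r, A]] [[-A, r], [r, B]] = 1` on the block `{2b+1, 2b+2}`,
  -- cut down to `B A = 1` when `2b+2 = n`.
  all_goals
    rcases hb with rfl | rfl <;>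
    simp (disch := omega) only [evenFactor_diag_of_odd, evenFactor_diag_of_even,
      evenFactor_succ_of_odd, evenFactor_succ_left_of_odd] <;> split_ifs <;>
    first
      | omega | ring1 | linear_combination hblock (by omega) | linear_combination hcut (by omega)

theorem det_trunc_evenFactor {n : ℕ} (hr : ∀ k, 1 ≤ k → k < n → A k * B k + r k ^ 2 = 1)
    (k : ℕ) (hk : 1 ≤ k) (hkn : k ≤ n) :
    (trunc (evenFactor A B r) k).det = (-1) ^ (k / 2) * if Even k then A k else 1 := by
  induction k using Nat.twoStepInduction with
  | zero => omega
  | one => simp [trunc, evenFactor_zero_zero]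
  | more k ih₀ ih₁ =>
    rw [det_trunc_succ_succ_of_tridiagonal _ (fun i j h => evenFactor_eq_zero A B r (by omega)),
      ih₁ (by omega) (by omega)]
    rcases Nat.mod_two_eq_zero_or_one k with hk2 | hk2
    · rw [evenFactor_diag_of_odd A B r (by omega),
        evenFactor_eq_zero A B r (i := k + 1) (j := k) (by omega),
        if_neg (show ¬Even (k + 1) from Nat.not_even_iff.2 (by omega)),
        if_pos (show Even (k + 2) from Nat.even_iff.2 (by omega)),
        show (k + 2) / 2 = (k + 1) / 2 + 1 by omega]
      ring
    · rw [ih₀ (by omega) (by omega), evenFactor_diag_of_even A B r (by omega) (by omega),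
        evenFactor_succ_of_odd A B r hk2, evenFactor_succ_left_of_odd A B r hk2,
        if_pos (show Even (k + 1) from Nat.even_iff.2 (by omega)),
        if_neg (show ¬Even (k + 2) from Nat.not_even_iff.2 (by omega)),
        if_neg (show ¬Even k from Nat.not_even_iff.2 hk2), show (k + 2) / 2 = k / 2 + 1 by omega,
        show (k + 1) / 2 = k / 2 + 1 by omega]
      linear_combination (-1) ^ (k / 2 + 1) * hr (k + 1) (by omega) (by omega)

end Factors

section Pencil

variable {R : Type*} [CommRing R]

/-- The recurrence of `(p_k, p*_k)` with the factors `e_k` removed, with `x k`, `y k` in place of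
`ϖ*_k(z)`, `ϖ_k(z)` and `A`, `B` in place of `a`, `conj ∘ a`. -/
def szego (x y A B : ℕ → R) : ℕ → R × R
  | 0 => (1, 1)
  | k + 1 => (x k * (szego x y A B k).1 + A (k + 1) * y k * (szego x y A B k).2,
      B (k + 1) * x k * (szego x y A B k).1 + y k * (szego x y A B k).2)

/-- The tridiagonal matrix `D* N - D L`, where `L = oddFactor A B r` and `N = evenFactor B A r`
is the inverse of `M = evenFactor A B r`. -/
def pencil (x y A B r : ℕ → R) (i j : ℕ) : R :=
  x i * evenFactor B A r i j - y i * oddFactor A B r i j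

variable (x y A B r : ℕ → R)

theorem szego_succ (k : ℕ) : szego x y A B (k + 1) =
    (x k * (szego x y A B k).1 + A (k + 1) * y k * (szego x y A B k).2,
      B (k + 1) * x k * (szego x y A B k).1 + y k * (szego x y A B k).2) := rfl

theorem szego_fst_congr_right {B' : ℕ → R} {n : ℕ} (h : ∀ k < n, B' k = B k) :
    (szego x y A B' n).1 = (szego x y A B n).1 := by
  have hall : ∀ m < n, szego x y A B' m = szego x y A B m := by
    intro m hm
    induction m with
    | zero => rfl
    | succ m ih => rw [szego_succ, szego_succ, ih (by omega), h (m + 1) hm]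
  cases n with
  | zero => rfl
  | succ m => rw [szego_succ, szego_succ, hall m (by omega)]

theorem trunc_pencil (n : ℕ) :
    trunc (pencil x y A B r) n = diagonal (fun i : Fin n => x i) * trunc (evenFactor B A r) n -
      diagonal (fun i : Fin n => y i) * trunc (oddFactor A B r) n := by
  ext i j
  simp [pencil, trunc, diagonal_mul]

theorem pencil_tridiagonal (i j : ℕ) (h : i + 2 ≤ j ∨ j + 2 ≤ i) : pencil x y A B r i j = 0 := by
  rw [pencil, evenFactor_eq_zero B A r (by omega), oddFactor_eq_zero A B r (by omega)]
  ring

theorem det_trunc_pencil {n : ℕ} (hr : ∀ k, 1 ≤ k → k < n → A k * B k + r k ^ 2 = 1)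
    (k : ℕ) (hkn : k ≤ n) :
    (trunc (pencil x y A B r) k).det =
      (-1) ^ (k / 2) * if Even k then (szego x y A B k).2 else (szego x y A B k).1 := by
  induction k using Nat.twoStepInduction with
  | zero => simp [trunc, szego]
  | one =>
    simp [trunc, szego, pencil, evenFactor_zero_zero, oddFactor_diag_of_even]
    ring
  | more k ih₀ ih₁ =>
    rw [det_trunc_succ_succ_of_tridiagonal _ (pencil_tridiagonal x y A B r), ih₀ (by omega),
      ih₁ (by omega), szego_succ _ _ _ _ (k + 1), szego_succ _ _ _ _ k]
    simp only [pencil]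
    rcases Nat.mod_two_eq_zero_or_one k with hk2 | hk2
    · rw [evenFactor_diag_of_odd B A r (by omega), oddFactor_diag_of_odd A B r (by omega),
        evenFactor_eq_zero B A r (i := k + 1) (j := k) (by omega),
        evenFactor_eq_zero B A r (i := k) (j := k + 1) (by omega),
        oddFactor_succ_of_even A B r hk2, oddFactor_succ_left_of_even A B r hk2,
        if_pos (show Even (k + 2) from Nat.even_iff.2 (by omega)),
        if_neg (show ¬Even (k + 1) from Nat.not_even_iff.2 (by omega)),
        if_pos (show Even k from Nat.even_iff.2 hk2), show (k + 2) / 2 = k / 2 + 1 by omega,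
        show (k + 1) / 2 = k / 2 by omega]
      linear_combination -(-1) ^ (k / 2) * y (k + 1) * y k * (szego x y A B k).2 *
        hr (k + 1) (by omega) (by omega)
    · rw [evenFactor_diag_of_even B A r (by omega) (by omega),
        oddFactor_diag_of_even A B r (by omega),
        evenFactor_succ_of_odd B A r hk2, evenFactor_succ_left_of_odd B A r hk2,
        oddFactor_eq_zero A B r (i := k + 1) (j := k) (by omega),
        oddFactor_eq_zero A B r (i := k) (j := k + 1) (by omega),
        if_neg (show ¬Even (k + 2) from Nat.not_even_iff.2 (by omega)),
        if_pos (show Even (k + 1) from Nat.even_iff.2 (by omega)),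
        if_neg (show ¬Even k from Nat.not_even_iff.2 hk2), show (k + 2) / 2 = k / 2 + 1 by omega,
        show (k + 1) / 2 = k / 2 + 1 by omega]
      linear_combination -(-1) ^ (k / 2) * x (k + 1) * x k * (szego x y A B k).1 *
        hr (k + 1) (by omega) (by omega)

theorem det_sub_mul_cmv_of_unitary {n : ℕ} (hr : ∀ k, 1 ≤ k → k < n → A k * B k + r k ^ 2 = 1)
    (hlast : Even n → A n * B n = 1) :
    (diagonal (fun i : Fin n => x i) - diagonal (fun i : Fin n => y i) *
      (trunc (oddFactor A B r) n * trunc (evenFactor A B r) n)).det = (szego x y A B n).1 := by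
  have hfactor : diagonal (fun i : Fin n => x i) - diagonal (fun i : Fin n => y i) *
      (trunc (oddFactor A B r) n * trunc (evenFactor A B r) n) =
      trunc (pencil x y A B r) n * trunc (evenFactor A B r) n := by
    rw [trunc_pencil, sub_mul, mul_assoc, trunc_evenFactor_swap_mul A B r hr hlast, mul_one,
      mul_assoc]
  rw [hfactor, det_mul]
  rcases Nat.eq_zero_or_pos n with rfl | hn
  · simp [szego]
  rw [det_trunc_pencil x y A B r hr n le_rfl, det_trunc_evenFactor A B r hr n hn le_rfl,
    mul_mul_mul_comm, ← pow_add, ← two_mul, pow_mul, neg_one_sq, one_pow, one_mul]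
  split_ifs with heven
  · obtain ⟨k, rfl⟩ : ∃ k, n = k + 1 := ⟨n - 1, by omega⟩
    rw [szego_succ]
    linear_combination x k * (szego x y A B k).1 * hlast heven
  · rw [mul_one]

end Pencil

theorem det_sub_mul_cmv {K : Type*} [Field K] (x y A B r : ℕ → K) {n : ℕ}
    (hr : ∀ k, 1 ≤ k → k < n → A k * B k + r k ^ 2 = 1) :
    (diagonal (fun i : Fin n => x i) - diagonal (fun i : Fin n => y i) *
      (trunc (oddFactor A B r) n * trunc (evenFactor A B r) n)).det = (szego x y A B n).1 := by
  rcases Nat.even_or_odd n with heven | hodd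
  swap
  · exact det_sub_mul_cmv_of_unitary x y A B r hr fun h => absurd hodd (Nat.not_odd_iff_even.2 h)
  rcases eq_or_ne (A n) 0 with hA | hA
  · rcases Nat.eq_zero_or_pos n with rfl | hn
    · simp [szego]
    obtain ⟨m, rfl⟩ : ∃ m, n = m + 1 := ⟨n - 1, by omega⟩
    have hm : m % 2 = 1 := by have := Nat.even_iff.1 heven; omega
    have hcol : ∀ i, (trunc (oddFactor A B r) (m + 1) * trunc (evenFactor A B r) (m + 1)) i
        (Fin.last m) = 0 := by
      intro i
      rw [mul_apply]
      refine Finset.sum_eq_zero fun k _ => ?_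
      rcases eq_or_ne (k : ℕ) m with hk | hk
      · simp [trunc, hk, evenFactor_diag_of_odd A B r (i := m) hm, hA]
      · simp [trunc, evenFactor_eq_zero A B r (i := k) (j := m) (by omega)]
    rw [det_diagonal_sub_diagonal_mul_of_col_last_eq_zero x y _ hcol, trunc_cmv_submatrix_castSucc,
      det_sub_mul_cmv_of_unitary x y A B r (n := m) (fun k h1 h2 => hr k h1 (by omega))
        fun h => absurd h (Nat.not_even_iff.2 hm),
      szego_succ, hA]
    ring
  -- The truncation never reads `B n`, so it may be chosen to make the cut block invertible.
  · set B' := Function.update B n (A n)⁻¹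
    have hB' : ∀ k < n, B' k = B k := fun k hk => Function.update_of_ne hk.ne _ _
    have h := det_sub_mul_cmv_of_unitary x y A B' r (fun k h1 h2 => hB' k h2 ▸ hr k h1 h2)
      fun _ => by simp [B', hA]
    rwa [trunc_oddFactor_congr_right A B r hB', trunc_evenFactor_congr_right A B r hB',
      szego_fst_congr_right x y A B hB'] at h

theorem mul_conj_add_sq_sqrt_one_sub {w : ℂ} (hw : ‖w‖ ≤ 1) :
    w * starRingEnd ℂ w + ((Real.sqrt (1 - ‖w‖ ^ 2) : ℝ) : ℂ) ^ 2 = 1 := by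
  rw [Complex.mul_conj, Complex.normSq_eq_norm_sq, ← Complex.ofReal_pow,
    Real.sq_sqrt (by nlinarith [norm_nonneg w]), ← Complex.ofReal_add]
  simp

theorem sqrt_one_sub_sq_pos {w : ℂ} (hw : ‖w‖ < 1) : 0 < Real.sqrt (1 - ‖w‖ ^ 2) :=
  Real.sqrt_pos.2 (by nlinarith [norm_nonneg w])

theorem normSq_sub_normSq_szego_step (t s a w : ℂ) :
    Complex.normSq (1 * t + a * -starRingEnd ℂ w * s) -
        Complex.normSq (starRingEnd ℂ a * 1 * t + -starRingEnd ℂ w * s) =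
      (1 - Complex.normSq a) * (Complex.normSq t - Complex.normSq w * Complex.normSq s) := by
  simp only [Complex.normSq_apply, Complex.add_re, Complex.add_im, Complex.mul_re, Complex.mul_im,
    Complex.neg_re, Complex.neg_im, Complex.conj_re, Complex.conj_im, Complex.one_re,
    Complex.one_im]
  ring

theorem szego_fst_ne_zero (α a : ℕ → ℂ) {n : ℕ} (hα : ∀ k < n, ‖α k‖ < 1)
    (ha : ∀ k, 1 ≤ k → k ≤ n → ‖a k‖ < 1) :
    (szego (fun _ => 1) (fun k => -starRingEnd ℂ (α k)) a (fun k => starRingEnd ℂ (a k)) n).1 ≠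
      0 := by
  set q := szego (fun _ => 1) (fun k => -starRingEnd ℂ (α k)) a (fun k => starRingEnd ℂ (a k))
  suffices ∀ k ≤ n, Complex.normSq (q k).2 ≤ Complex.normSq (q k).1 ∧
      0 < Complex.normSq (q k).1 from Complex.normSq_pos.1 (this n le_rfl).2
  intro k hk
  induction k with
  | zero => simp [q, szego]
  | succ k ih =>
    obtain ⟨hle, hpos⟩ := ih (by omega)
    have ha1 : Complex.normSq (a (k + 1)) < 1 := by
      rw [Complex.normSq_eq_norm_sq]; nlinarith [ha (k + 1) (by omega) hk, norm_nonneg (a (k + 1))]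
    have hα1 : Complex.normSq (α k) < 1 := by
      rw [Complex.normSq_eq_norm_sq]; nlinarith [hα k (by omega), norm_nonneg (α k)]
    have hgap : 0 < Complex.normSq (q (k + 1)).1 - Complex.normSq (q (k + 1)).2 := by
      rw [show q (k + 1) = _ from szego_succ _ _ _ _ k, normSq_sub_normSq_szego_step]
      have hαs := mul_le_mul_of_nonneg_left hle (Complex.normSq_nonneg (α k))
      exact mul_pos (by linarith) (by nlinarith [mul_lt_mul_of_pos_right hα1 hpos])
    exact ⟨by linarith, by linarith [Complex.normSq_nonneg (q (k + 1)).2]⟩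

theorem orfNum_eq_prod_smul_szego (α a : ℕ → ℂ) (z : ℂ) (k : ℕ) :
    ((orfNum α a k).1 z, (orfNum α a k).2 z) = (∏ j ∈ Finset.range k, (eS α a (j + 1) : ℂ)) •
      szego (fun i => z - α i) (fun i => 1 - starRingEnd ℂ (α i) * z) a
        (fun i => starRingEnd ℂ (a i)) k := by
  induction k with
  | zero => simp [orfNum, szego]
  | succ k ih =>
    simp only [Prod.ext_iff, Prod.smul_fst, Prod.smul_snd, smul_eq_mul] at ih
    simp only [orfNum, szego_succ, pws, pw, ih.1, ih.2, Finset.prod_range_succ, Prod.smul_mk,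
      smul_eq_mul, Prod.mk.injEq]
    constructor <;> ring

theorem prod_eS_ne_zero {α a : ℕ → ℂ} {n : ℕ} (hα : ∀ k ≤ n, ‖α k‖ < 1)
    (ha : ∀ k, 1 ≤ k → k ≤ n → ‖a k‖ < 1) :
    ∏ j ∈ Finset.range n, (eS α a (j + 1) : ℂ) ≠ 0 := by
  refine Finset.prod_ne_zero_iff.2 fun j hj => Complex.ofReal_ne_zero.2 (ne_of_gt ?_)
  rw [Finset.mem_range] at hj
  exact div_pos (sqrt_one_sub_sq_pos (hα (j + 1) hj))
    (mul_pos (sqrt_one_sub_sq_pos (hα j hj.le)) (sqrt_one_sub_sq_pos (ha (j + 1) (by omega) hj)))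

theorem cmvN_eq (a : ℕ → ℂ) (n : ℕ) :
    cmvN a n = trunc (oddFactor a (fun k => starRingEnd ℂ (a k)) fun k => (rhoS a k : ℂ)) n *
      trunc (evenFactor a (fun k => starRingEnd ℂ (a k)) fun k => (rhoS a k : ℂ)) n := rfl

theorem det_diagonal_sub_diagonal_mul_cmvN (x y a : ℕ → ℂ) {n : ℕ}
    (ha : ∀ k, 1 ≤ k → k < n → ‖a k‖ ≤ 1) :
    (diagonal (fun i : Fin n => x i) - diagonal (fun i : Fin n => y i) * cmvN a n).det =
      (szego x y a (fun k => starRingEnd ℂ (a k)) n).1 := by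
  rw [cmvN_eq]
  exact det_sub_mul_cmv x y a _ _ fun k h1 h2 => mul_conj_add_sq_sqrt_one_sub (ha k h1 h2)

theorem isUnit_det_one_add_diagonal_mul_cmvN {α a : ℕ → ℂ} {n : ℕ} (hα : ∀ k < n, ‖α k‖ < 1)
    (ha : ∀ k, 1 ≤ k → k ≤ n → ‖a k‖ < 1) :
    IsUnit (1 + diagonal (fun i : Fin n => starRingEnd ℂ (α i)) * cmvN a n).det := by
  have h := det_diagonal_sub_diagonal_mul_cmvN (fun _ => 1) (fun k => -starRingEnd ℂ (α k)) a
    fun k h1 h2 => (ha k h1 h2.le).le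
  simp only [diagonal_one, ← diagonal_neg, neg_mul, sub_neg_eq_add] at h
  rw [h, isUnit_iff_ne_zero]
  exact szego_fst_ne_zero α a hα ha

theorem isUnit_det_etaMat {α : ℕ → ℂ} {n : ℕ} (hα : ∀ k < n, ‖α k‖ < 1) :
    IsUnit (etaMat α n).det := by
  rw [etaMat, det_diagonal, isUnit_iff_ne_zero, Finset.prod_ne_zero_iff]
  exact fun i _ => Complex.ofReal_ne_zero.2 (sqrt_one_sub_sq_pos (hα i i.isLt)).ne'

theorem smul_denominator_sub_numerator (α : ℕ → ℂ) {n : ℕ} (T : Matrix (Fin n) (Fin n) ℂ)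
    (z : ℂ) :
    z • (1 + diagonal (fun i : Fin n => starRingEnd ℂ (α i)) * T) -
        (T + diagonal fun i : Fin n => α i) =
      diagonal (fun i : Fin n => z - α i) -
        diagonal (fun i : Fin n => 1 - starRingEnd ℂ (α i) * z) * T := by
  ext i j
  simp only [Matrix.sub_apply, Matrix.add_apply, Matrix.smul_apply, one_apply, diagonal_mul,
    diagonal_apply, smul_eq_mul]
  split_ifs <;> ring

end CMV

open CMV Matrix in
theorem orf_numerator_eq_det_cmv_general
    (n : ℕ) (α a : ℕ → ℂ) (hα0 : α 0 = 0)
    (hα : ∀ k, 1 ≤ k → k ≤ n → ‖α k‖ < 1) (ha : ∀ k, 1 ≤ k → k ≤ n → ‖a k‖ < 1) :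
    (∃ c : ℂ, c ≠ 0 ∧ ∀ z : ℂ,
      (orfNum α a n).1 z =
        c * Matrix.det
          ((Matrix.diagonal fun i : Fin n => z - α i) -
            (Matrix.diagonal fun i : Fin n => 1 - (starRingEnd ℂ) (α i) * z) * cmvN a n)) ∧
    spectrum ℂ (zetaTildeMat α (cmvN a n)) = {z : ℂ | (orfNum α a n).1 z = 0} := by
  have hα' : ∀ k ≤ n, ‖α k‖ < 1 := by
    rintro (_ | k) hk
    · simp [hα0]
    · exact hα _ k.succ_pos hk
  have hdet (z : ℂ) := det_diagonal_sub_diagonal_mul_cmvN (n := n) (fun k => z - α k)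
    (fun k => 1 - starRingEnd ℂ (α k) * z) a fun k h1 h2 => (ha k h1 h2.le).le
  have hp (z : ℂ) := congrArg Prod.fst (orfNum_eq_prod_smul_szego α a z n)
  simp only [Prod.smul_fst, smul_eq_mul] at hp
  refine ⟨⟨_, prod_eS_ne_zero hα' ha, fun z => by rw [hp, hdet]⟩, ?_⟩
  rw [zetaTildeMat, mul_assoc _ _ (_⁻¹),
    spectrum_nonsing_inv_mul_mul _ _ (isUnit_det_etaMat fun k hk => hα' k hk.le),
    spectrum_mul_nonsing_inv _ _
      (isUnit_det_one_add_diagonal_mul_cmvN (fun k hk => hα' k hk.le) ha)]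
  ext z
  rw [Set.mem_ofPred_eq, Set.mem_ofPred_eq, smul_denominator_sub_numerator, hdet, hp, mul_eq_zero,
    or_iff_right (prod_eS_ne_zero hα' ha)]

/-- the numerator `p_n = π_n φ_n` of the `n`-th orthogonal rational
function is, up to a nonzero constant, `det(D*_n(z) − D_n(z) 𝒞_n)` where
`D*_n(z) = diag(z − α_i)` and `D_n(z) = diag(1 − conj(α_i) z)`; in particular the zeros
of `φ_n` are the eigenvalues of `ζ̃_{𝒜_n}(𝒞_n)`. -/
theorem orf_numerator_eq_det_cmv
    (n : ℕ) (hn : 1 ≤ n) (α a : ℕ → ℂ) (hα0 : α 0 = 0) (ha0 : a 0 = 1)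
    (hα : ∀ k, 1 ≤ k → k ≤ n → ‖α k‖ < 1) (ha : ∀ k, 1 ≤ k → k ≤ n → ‖a k‖ < 1) :
    (∃ c : ℂ, c ≠ 0 ∧ ∀ z : ℂ,
      (orfNum α a n).1 z =
        c * Matrix.det
          ((Matrix.diagonal fun i : Fin n => z - α i) -
            (Matrix.diagonal fun i : Fin n => 1 - (starRingEnd ℂ) (α i) * z) * cmvN a n)) ∧
    spectrum ℂ (zetaTildeMat α (cmvN a n)) = {z : ℂ | (orfNum α a n).1 z = 0} :=
  orf_numerator_eq_det_cmv_general n α a hα0 hα ha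
end
end

section
/- Fix n ≥ 1, parameters α_1, …, α_n ∈ 𝔻 (with α_0 = 0) and a_1, …, a_n ∈ 𝔻, and let φ_n and p_n = π_n φ_n be given by the orthogonal rational function recurrence. Let ℋ_n be the n×n principal submatrix of the Hessenberg matrix ℋ(a). Then there exists a nonzero constant c ∈ ℂ such that p_n(z) = c · det( D*_n(z) − D_n(z) ℋ_n ) for all z ∈ ℂ, where D*_n(z) = diag(z − α_0, …, z − α_{n−1}) and D_n(z) = diag(1 − conj(α_0) z, …, 1 − conj(α_{n−1}) z). In particular, the zeros of φ_n are exactly the eigenvalues of ζ̃_{𝒜_n}(ℋ_n) with 𝒜_n = diag(α_0, …, α_{n−1}). -/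
/-!
Setup for orthogonal rational functions on the unit circle: `ϖ_k(z) = 1 − conj(α_k) z`,
`ϖ*_k(z) = z − α_k`, `η_k = (1 − |α_k|²)^{1/2}`, `ρ_k = (1 − |a_k|²)^{1/2}`,
`e_k = η_k/(η_{k−1} ρ_k)` (conventions `α_0 = 0`, `a_0 = 1`).
-/

noncomputable section

/-- The `n×n` principal submatrix of the Hessenberg matrix `ℋ(a)` (with `a_0 = 1`):
`ℋ_{i,j} = −conj(a_i)(∏_{k=i+1}^{j} ρ_k) a_{j+1}` for `i ≤ j`, `ℋ_{j+1,j} = ρ_{j+1}`,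
and `0` below the subdiagonal. -/
def hessN (a : ℕ → ℂ) (n : ℕ) : Matrix (Fin n) (Fin n) ℂ :=
  Matrix.of fun i j : Fin n =>
    if (i : ℕ) ≤ (j : ℕ) then
      -(starRingEnd ℂ) (a i) *
        (∏ k ∈ Finset.Icc ((i : ℕ) + 1) (j : ℕ), (rhoS a k : ℂ)) * a ((j : ℕ) + 1)
    else if (i : ℕ) = (j : ℕ) + 1 then (rhoS a ((j : ℕ) + 1) : ℂ)
    else 0

/-!
Homogenize `z = t / s`, so that `ϖ_k` and `ϖ*_k` become `s − conj(α_k) t` and `t − α_k s`, and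
consider the pencil `D*(s,t) − D(s,t) ℋ_m = t (1 + 𝒜†ℋ_m) − s (ℋ_m + 𝒜)`. Expanding its
determinant along the last column, and the determinant of the matrix with that column replaced
along the last row, gives the recurrence of `(p_m, p*_m)` up to the factors `e_k`, once
`ρ_k² = 1 − |a_k|²` is used. At `(s, t) = (1, z)` this is the first claim.

At `(s, t) = (0, 1)` the pencil is `1 + 𝒜†ℋ_n`, and the recurrence is a Schur step
`(x, y) ↦ (x + a y, conj(a) x + y)` with `|a| < 1`, which keeps `|α_m p*_m| < |p_m|`; so
`1 + 𝒜†ℋ_n` is invertible. Then `z − ζ̃(ℋ_n) = η⁻¹ (z(1 + 𝒜†ℋ_n) − (ℋ_n + 𝒜))(1 + 𝒜†ℋ_n)⁻¹ η`,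
whose determinant vanishes exactly when `p_n(z) = 0`.
-/

namespace Matrix

theorem det_updateCol_single {R : Type*} [CommRing R] {m : ℕ}
    (A : Matrix (Fin (m + 1)) (Fin (m + 1)) R) (i j : Fin (m + 1)) (c : R) :
    (A.updateCol j (Pi.single i c)).det =
      (-1) ^ (i + j : ℕ) * c * (A.submatrix i.succAbove j.succAbove).det := by
  rw [det_succ_column _ j, Finset.sum_eq_single i (fun k _ hk => by simp [hk]) (by simp)]
  congr 2
  · simp
  · ext k l
    simp

end Matrix

theorem norm_conj_mul_add_lt_norm_add_mul {x y c : ℂ} (hyx : ‖y‖ < ‖x‖) (hc : ‖c‖ < 1) :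
    ‖starRingEnd ℂ c * x + y‖ < ‖x + c * y‖ := by
  have hid : Complex.normSq (x + c * y) - Complex.normSq (starRingEnd ℂ c * x + y) =
      (1 - Complex.normSq c) * (Complex.normSq x - Complex.normSq y) := by
    simp only [Complex.normSq_apply, Complex.mul_re, Complex.mul_im, Complex.add_re,
      Complex.add_im, Complex.conj_re, Complex.conj_im]
    ring
  simp only [Complex.normSq_eq_norm_sq] at hid
  have hpos : 0 < (1 - ‖c‖ ^ 2) * (‖x‖ ^ 2 - ‖y‖ ^ 2) := by
    apply mul_pos <;> nlinarith [norm_nonneg c, norm_nonneg y]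
  exact lt_of_pow_lt_pow_left₀ 2 (norm_nonneg _) (by linarith)

theorem mem_spectrum_iff_det_smul_sub_eq_zero {ι K : Type*} [Fintype ι] [DecidableEq ι]
    [Field K] (B G E : Matrix ι ι K) (hG : IsUnit G.det) (hE : IsUnit E.det) (z : K) :
    z ∈ spectrum K (E⁻¹ * B * G⁻¹ * E) ↔ (z • G - B).det = 0 := by
  have hfactor : algebraMap K (Matrix ι ι K) z - E⁻¹ * B * G⁻¹ * E =
      E⁻¹ * ((z • G - B) * G⁻¹) * E := by
    rw [Matrix.sub_mul, smul_mul_assoc, Matrix.mul_nonsing_inv _ hG, Matrix.mul_sub,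
      Matrix.sub_mul, mul_smul_comm, mul_one, smul_mul_assoc, Matrix.nonsing_inv_mul _ hE,
      Algebra.algebraMap_eq_smul_one, Matrix.mul_assoc E⁻¹]
  rw [spectrum.mem_iff, Matrix.isUnit_iff_isUnit_det, hfactor, isUnit_iff_ne_zero, not_not]
  simp only [Matrix.det_mul, Matrix.det_nonsing_inv, Ring.inverse_eq_inv',
    isUnit_iff_ne_zero.mp hG, isUnit_iff_ne_zero.mp hE, mul_eq_zero, inv_eq_zero, or_false,
    false_or]

theorem sqrt_one_sub_norm_sq_pos {x : ℂ} (h : ‖x‖ < 1) : 0 < √(1 - ‖x‖ ^ 2) :=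
  Real.sqrt_pos.mpr (by nlinarith [norm_nonneg x])

namespace ORF

open Finset Matrix

variable (α a : ℕ → ℂ) (s t : ℂ)

def hessEntry (i j : ℕ) : ℂ :=
  if i ≤ j then -(starRingEnd ℂ) (a i) * (∏ k ∈ Icc (i + 1) j, (rhoS a k : ℂ)) * a (j + 1)
  else if i = j + 1 then (rhoS a (j + 1) : ℂ)
  else 0

theorem hessN_apply {n : ℕ} (i j : Fin n) : hessN a n i j = hessEntry a i j := rfl

theorem hessEntry_of_le {i j : ℕ} (h : i ≤ j) :
    hessEntry a i j =
      -(starRingEnd ℂ) (a i) * (∏ k ∈ Icc (i + 1) j, (rhoS a k : ℂ)) * a (j + 1) :=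
  if_pos h

theorem hessEntry_succ_self (j : ℕ) : hessEntry a (j + 1) j = rhoS a (j + 1) := by
  simp [hessEntry]

theorem hessEntry_of_succ_lt {i j : ℕ} (h : j + 1 < i) : hessEntry a i j = 0 := by
  simp [hessEntry, show ¬ i ≤ j by omega, show i ≠ j + 1 by omega]

def pencilEntry (i j : ℕ) : ℂ :=
  (t - α i * s) * (if i = j then 1 else 0) - (s - starRingEnd ℂ (α i) * t) * hessEntry a i j

def pencil (m : ℕ) : Matrix (Fin m) (Fin m) ℂ := of fun i j => pencilEntry α a s t i j

theorem pencil_eq_diagonal_sub (m : ℕ) :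
    pencil α a s t m = diagonal (fun i : Fin m => t - α i * s) -
      diagonal (fun i : Fin m => s - starRingEnd ℂ (α i) * t) * hessN a m := by
  ext i j
  by_cases hij : i = j
  · subst hij; simp [pencil, pencilEntry, diagonal_mul, hessN_apply]
  · simp [pencil, pencilEntry, diagonal_mul, hessN_apply, hij, Fin.val_ne_of_ne hij]

theorem pencil_eq_smul_sub_smul (m : ℕ) :
    pencil α a s t m = t • (1 + diagonal (fun i : Fin m => starRingEnd ℂ (α i)) * hessN a m) -
      s • (hessN a m + diagonal fun i : Fin m => α i) := by
  ext i j
  by_cases hij : i = j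
  · subst hij; simp [pencil, pencilEntry, diagonal_mul, hessN_apply]; ring
  · simp [pencil, pencilEntry, diagonal_mul, hessN_apply, hij, Fin.val_ne_of_ne hij, one_apply]
    ring

def tailCol (m i : ℕ) : ℂ :=
  (s - starRingEnd ℂ (α i) * t) * starRingEnd ℂ (a i) * ∏ k ∈ Icc (i + 1) m, (rhoS a k : ℂ)

theorem pencilEntry_of_le {i m : ℕ} (h : i ≤ m) :
    pencilEntry α a s t i m =
      (t - α m * s) * (if i = m then 1 else 0) + a (m + 1) * tailCol α a s t m i := by
  rw [pencilEntry, hessEntry_of_le a h, tailCol]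
  split_ifs with him
  · subst him; ring
  · ring

def pencilTail (m : ℕ) : Matrix (Fin (m + 1)) (Fin (m + 1)) ℂ :=
  (pencil α a s t (m + 1)).updateCol (Fin.last m) fun i => tailCol α a s t m i

theorem pencil_submatrix_castSucc (m : ℕ) :
    (pencil α a s t (m + 1)).submatrix Fin.castSucc Fin.castSucc = pencil α a s t m := by
  ext i j
  simp [pencil]

theorem det_pencil_succ (m : ℕ) :
    (pencil α a s t (m + 1)).det =
      (t - α m * s) * (pencil α a s t m).det + a (m + 1) * (pencilTail α a s t m).det := by
  have hcol : pencil α a s t (m + 1) = (pencil α a s t (m + 1)).updateCol (Fin.last m)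
      ((t - α m * s) • Pi.single (Fin.last m) 1 +
        a (m + 1) • fun i : Fin (m + 1) => tailCol α a s t m i) := by
    ext i j
    rcases eq_or_ne j (Fin.last m) with rfl | hj
    · simp [pencil, pencilEntry_of_le α a s t (Fin.is_le i), Pi.single_apply, Fin.ext_iff]
    · rw [updateCol_ne hj]
  rw [hcol, det_updateCol_add, det_updateCol_smul, det_updateCol_smul, det_updateCol_single,
    Fin.succAbove_last, pencil_submatrix_castSucc, pencilTail]
  simp [← two_mul]

theorem pencilTail_submatrix_castSucc (m : ℕ) :
    (pencilTail α a s t (m + 1)).submatrix Fin.castSucc Fin.castSucc =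
      pencil α a s t (m + 1) := by
  rw [← pencil_submatrix_castSucc α a s t (m + 1), pencilTail]
  ext i j
  simp

theorem pencilTail_submatrix_succAbove (m : ℕ) :
    (pencilTail α a s t (m + 1)).submatrix Fin.castSucc (Fin.last m).castSucc.succAbove =
      (pencil α a s t (m + 1)).updateCol (Fin.last m)
        ((rhoS a (m + 1) : ℂ) • fun i : Fin (m + 1) => tailCol α a s t m i) := by
  ext i j
  induction j using Fin.lastCases with
  | last =>
    simp only [pencilTail, submatrix_apply, Fin.succAbove_castSucc_self, Fin.succ_last,
      updateCol_self, Pi.smul_apply, smul_eq_mul, tailCol, Fin.val_castSucc]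
    rw [prod_Icc_succ_top (by omega)]
    ring
  | cast j =>
    rw [submatrix_apply, Fin.succAbove_castSucc_of_lt _ _ (Fin.castSucc_lt_last j),
      pencilTail, updateCol_ne (Fin.castSucc_lt_last _).ne,
      updateCol_ne (Fin.castSucc_lt_last j).ne]
    simp [pencil]

theorem det_pencilTail_succ (m : ℕ) :
    (pencilTail α a s t (m + 1)).det = (s - starRingEnd ℂ (α (m + 1)) * t) *
      (starRingEnd ℂ (a (m + 1)) * (pencil α a s t (m + 1)).det +
        (rhoS a (m + 1) : ℂ) ^ 2 * (pencilTail α a s t m).det) := by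
  have hlast : pencilTail α a s t (m + 1) (Fin.last (m + 1)) (Fin.last (m + 1)) =
      (s - starRingEnd ℂ (α (m + 1)) * t) * starRingEnd ℂ (a (m + 1)) := by
    simp [pencilTail, tailCol]
  have hsub : pencilTail α a s t (m + 1) (Fin.last (m + 1)) (Fin.last m).castSucc =
      -((s - starRingEnd ℂ (α (m + 1)) * t) * rhoS a (m + 1)) := by
    rw [pencilTail, updateCol_ne (Fin.castSucc_lt_last _).ne]
    simp [pencil, pencilEntry, hessEntry_succ_self]
  have hzero (j : Fin m) :
      pencilTail α a s t (m + 1) (Fin.last (m + 1)) j.castSucc.castSucc = 0 := by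
    rw [pencilTail, updateCol_ne (Fin.castSucc_lt_last _).ne]
    simp [pencil, pencilEntry, hessEntry_of_succ_lt a (show (j : ℕ) + 1 < m + 1 by omega),
      show m + 1 ≠ (j : ℕ) by omega]
  rw [det_succ_row _ (Fin.last (m + 1)), Fin.sum_univ_castSucc, Fin.sum_univ_castSucc]
  have hodd : (-1 : ℂ) ^ ((m + 1) + m) = -1 := Odd.neg_one_pow ⟨m, by ring⟩
  have heven : (-1 : ℂ) ^ ((m + 1) + (m + 1)) = 1 := Even.neg_one_pow ⟨m + 1, rfl⟩
  simp only [hzero, Fin.succAbove_last, hlast, hsub, pencilTail_submatrix_castSucc,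
    pencilTail_submatrix_succAbove, det_updateCol_smul, Fin.val_last,
    Fin.val_castSucc, hodd, heven, mul_zero, zero_mul, sum_const_zero, zero_add]
  rw [pencilTail]
  ring

/-- `s^k (p_k, p*_k)(t / s)`: the numerators made homogeneous of degree `k` in `(s, t)`. -/
def homNum : ℕ → ℂ × ℂ
  | 0 => (1, 1)
  | k + 1 =>
    ((eS α a (k + 1) : ℂ) * ((t - α k * s) * (homNum k).1 +
        a (k + 1) * (s - starRingEnd ℂ (α k) * t) * (homNum k).2),
     (eS α a (k + 1) : ℂ) * (starRingEnd ℂ (a (k + 1)) * (t - α k * s) * (homNum k).1 +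
        (s - starRingEnd ℂ (α k) * t) * (homNum k).2))

theorem orfNum_apply_eq_homNum (z : ℂ) (k : ℕ) :
    ((orfNum α a k).1 z, (orfNum α a k).2 z) = homNum α a 1 z k := by
  induction k with
  | zero => rfl
  | succ k ih =>
    rw [homNum, ← ih]
    simp only [orfNum, pws, pw, mul_one]

def eProd (m : ℕ) : ℂ := ∏ k ∈ range m, (eS α a (k + 1) : ℂ)

theorem ofReal_rhoS_sq {k : ℕ} (h : ‖a k‖ ≤ 1) :
    (rhoS a k : ℂ) ^ 2 = 1 - starRingEnd ℂ (a k) * a k := by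
  rw [← Complex.ofReal_pow, rhoS, Real.sq_sqrt (by nlinarith [norm_nonneg (a k)]),
    mul_comm, Complex.mul_conj, Complex.normSq_eq_norm_sq]
  push_cast
  ring

theorem eProd_mul_det_pencil (ha0 : a 0 = 1) (m : ℕ) (ha : ∀ k, 1 ≤ k → k ≤ m → ‖a k‖ ≤ 1) :
    eProd α a m * (pencil α a s t m).det = (homNum α a s t m).1 ∧
      eProd α a m * (pencilTail α a s t m).det =
        (s - starRingEnd ℂ (α m) * t) * (homNum α a s t m).2 := by
  induction m with
  | zero =>
    simp [eProd, homNum, pencilTail, tailCol, ha0]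
  | succ m ih =>
    obtain ⟨hP, hPtail⟩ := ih fun k hk hkm => ha k hk (by omega)
    have hρ := ofReal_rhoS_sq a (ha (m + 1) (by omega) le_rfl)
    have hE : eProd α a (m + 1) = eProd α a m * eS α a (m + 1) := prod_range_succ _ _
    have hdet := det_pencil_succ α a s t m
    rw [hE, det_pencilTail_succ, homNum, hdet]
    constructor
    · linear_combination (eS α a (m + 1) * (t - α m * s)) * hP +
        (eS α a (m + 1) * a (m + 1)) * hPtail
    · linear_combination
        (eS α a (m + 1) * (s - starRingEnd ℂ (α (m + 1)) * t) * starRingEnd ℂ (a (m + 1)) *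
          (t - α m * s)) * hP +
        (eS α a (m + 1) * (s - starRingEnd ℂ (α (m + 1)) * t)) * hPtail +
        (eProd α a m * eS α a (m + 1) * (s - starRingEnd ℂ (α (m + 1)) * t) *
          (pencilTail α a s t m).det) * hρ

theorem eS_pos {m k : ℕ} (hα : ∀ k ≤ m, ‖α k‖ < 1) (ha : ∀ k, 1 ≤ k → k ≤ m → ‖a k‖ < 1)
    (hk : 1 ≤ k) (hkm : k ≤ m) : 0 < eS α a k :=
  div_pos (sqrt_one_sub_norm_sq_pos (hα k hkm))
    (mul_pos (sqrt_one_sub_norm_sq_pos (hα (k - 1) (by omega)))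
      (sqrt_one_sub_norm_sq_pos (ha k hk hkm)))

theorem eProd_ne_zero {m : ℕ} (hα : ∀ k ≤ m, ‖α k‖ < 1)
    (ha : ∀ k, 1 ≤ k → k ≤ m → ‖a k‖ < 1) : eProd α a m ≠ 0 :=
  prod_ne_zero_iff.mpr fun k hk => Complex.ofReal_ne_zero.mpr
    (eS_pos α a hα ha (by omega) (by simpa using hk)).ne'

theorem norm_conj_mul_homNum_snd_lt {m : ℕ} (hα : ∀ k ≤ m, ‖α k‖ < 1)
    (ha : ∀ k, 1 ≤ k → k ≤ m → ‖a k‖ < 1) :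
    ‖starRingEnd ℂ (α m) * (homNum α a 0 1 m).2‖ < ‖(homNum α a 0 1 m).1‖ := by
  induction m with
  | zero => simpa [homNum] using hα 0 le_rfl
  | succ m ih =>
    set x := (homNum α a 0 1 m).1
    set y := -(starRingEnd ℂ (α m) * (homNum α a 0 1 m).2)
    set e : ℂ := (eS α a (m + 1) : ℂ)
    have hrec : homNum α a 0 1 (m + 1) =
        (e * (x + a (m + 1) * y), e * (starRingEnd ℂ (a (m + 1)) * x + y)) := by
      simp only [homNum, x, y, e]
      ext <;> ring
    have he : 0 < ‖e‖ := by
      simpa [e] using (eS_pos α a hα ha (by omega) le_rfl).ne'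
    have hxy : ‖starRingEnd ℂ (a (m + 1)) * x + y‖ < ‖x + a (m + 1) * y‖ :=
      norm_conj_mul_add_lt_norm_add_mul
        (by simpa [y] using ih (fun k hk => hα k (by omega)) fun k hk hkm => ha k hk (by omega))
        (ha (m + 1) (by omega) le_rfl)
    rw [hrec]
    calc ‖starRingEnd ℂ (α (m + 1)) * (e * (starRingEnd ℂ (a (m + 1)) * x + y))‖
        ≤ ‖e * (starRingEnd ℂ (a (m + 1)) * x + y)‖ := by
          rw [norm_mul, RCLike.norm_conj]
          exact mul_le_of_le_one_left (norm_nonneg _) (hα (m + 1) le_rfl).le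
      _ < ‖e * (x + a (m + 1) * y)‖ := by
          rw [norm_mul, norm_mul]
          exact mul_lt_mul_of_pos_left hxy he

theorem det_one_add_diagonal_conj_mul_hessN_ne_zero (ha0 : a 0 = 1) {n : ℕ}
    (hα : ∀ k ≤ n, ‖α k‖ < 1) (ha : ∀ k, 1 ≤ k → k ≤ n → ‖a k‖ < 1) :
    (1 + diagonal (fun i : Fin n => starRingEnd ℂ (α i)) * hessN a n).det ≠ 0 := by
  have hpencil : pencil α a 0 1 n =
      1 + diagonal (fun i : Fin n => starRingEnd ℂ (α i)) * hessN a n := by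
    simp [pencil_eq_smul_sub_smul]
  have hdet := (eProd_mul_det_pencil α a 0 1 ha0 n fun k hk hkn => (ha k hk hkn).le).1
  have hlt := norm_conj_mul_homNum_snd_lt α a hα ha
  rw [← hpencil]
  rintro hzero
  rw [hzero, mul_zero] at hdet
  rw [← hdet, norm_zero] at hlt
  exact (norm_nonneg _).not_gt hlt

theorem det_etaMat_ne_zero {n : ℕ} (hα : ∀ k ≤ n, ‖α k‖ < 1) : (etaMat α n).det ≠ 0 := by
  rw [etaMat, det_diagonal]
  exact prod_ne_zero_iff.mpr fun i _ =>
    Complex.ofReal_ne_zero.mpr (sqrt_one_sub_norm_sq_pos (hα i i.is_lt.le)).ne'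

end ORF

theorem orf_numerator_eq_det_hessenberg_general
    (n : ℕ) (α a : ℕ → ℂ) (hα0 : α 0 = 0) (ha0 : a 0 = 1)
    (hα : ∀ k, 1 ≤ k → k ≤ n → ‖α k‖ < 1) (ha : ∀ k, 1 ≤ k → k ≤ n → ‖a k‖ < 1) :
    (∃ c : ℂ, c ≠ 0 ∧ ∀ z : ℂ,
      (orfNum α a n).1 z =
        c * Matrix.det
          ((Matrix.diagonal fun i : Fin n => z - α i) -
            (Matrix.diagonal fun i : Fin n => 1 - (starRingEnd ℂ) (α i) * z) * hessN a n)) ∧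
    spectrum ℂ (zetaTildeMat α (hessN a n)) = {z : ℂ | (orfNum α a n).1 z = 0} := by
  have hα' : ∀ k ≤ n, ‖α k‖ < 1 := fun k hk => by
    rcases Nat.eq_zero_or_pos k with rfl | hk0
    · simp [hα0]
    · exact hα k hk0 hk
  have hnum (z : ℂ) : (orfNum α a n).1 z = ORF.eProd α a n * (ORF.pencil α a 1 z n).det := by
    rw [(ORF.eProd_mul_det_pencil α a 1 z ha0 n fun k hk hkn => (ha k hk hkn).le).1,
      ← ORF.orfNum_apply_eq_homNum]
  have hE := ORF.eProd_ne_zero α a hα' ha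
  refine ⟨⟨_, hE, fun z => by simp [hnum, ORF.pencil_eq_diagonal_sub]⟩, ?_⟩
  ext z
  rw [zetaTildeMat, mem_spectrum_iff_det_smul_sub_eq_zero _ _ _
      (isUnit_iff_ne_zero.mpr (ORF.det_one_add_diagonal_conj_mul_hessN_ne_zero α a ha0 hα' ha))
      (isUnit_iff_ne_zero.mpr (ORF.det_etaMat_ne_zero α hα')),
    Set.mem_ofPred_eq, hnum, ORF.pencil_eq_smul_sub_smul, one_smul, mul_eq_zero,
    or_iff_right hE]

/-- the numerator `p_n = π_n φ_n` of the `n`-th orthogonal rational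
function is, up to a nonzero constant, `det(D*_n(z) − D_n(z) ℋ_n)`; in particular the
zeros of `φ_n` are the eigenvalues of `ζ̃_{𝒜_n}(ℋ_n)`. -/
theorem orf_numerator_eq_det_hessenberg
    (n : ℕ) (hn : 1 ≤ n) (α a : ℕ → ℂ) (hα0 : α 0 = 0) (ha0 : a 0 = 1)
    (hα : ∀ k, 1 ≤ k → k ≤ n → ‖α k‖ < 1) (ha : ∀ k, 1 ≤ k → k ≤ n → ‖a k‖ < 1) :
    (∃ c : ℂ, c ≠ 0 ∧ ∀ z : ℂ,
      (orfNum α a n).1 z =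
        c * Matrix.det
          ((Matrix.diagonal fun i : Fin n => z - α i) -
            (Matrix.diagonal fun i : Fin n => 1 - (starRingEnd ℂ) (α i) * z) * hessN a n)) ∧
    spectrum ℂ (zetaTildeMat α (hessN a n)) = {z : ℂ | (orfNum α a n).1 z = 0} :=
  orf_numerator_eq_det_hessenberg_general n α a hα0 ha0 hα ha
end
end
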